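/- arXiv:2105.02382 — 11 statements merged into one kernel-verified Lean document; each statement's English description precedes it below -/
import Mathlib

section
/- Let n ≥ 1, let f : ℝⁿ → ℝ be symmetric (invariant under all coordinate permutations) and concave on the probability simplex Ωₙ. Then for every n×n density matrix ρ and every pure state decomposition {(p_k, ψ_k)} of ρ, the average coherence satisfies Σ_k p_k · f(|ψ_k(0)|², …, |ψ_k(n−1)|²) ≤ f(ρ₀₀, ρ₁₁, …, ρ_{n−1,n−1}), where ρ_ii are the diagonal entries of ρ. (Theorem 1, inequality part.) -/
open Matrix BigOperators
open scoped ComplexOrder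

noncomputable section

/-- A symmetric function: invariant under all coordinate permutations. -/
def SymmetricFn {n : ℕ} (f : (Fin n → ℝ) → ℝ) : Prop :=
  ∀ (σ : Equiv.Perm (Fin n)) (x : Fin n → ℝ), f (x ∘ σ) = f x

/-- A density matrix: positive semidefinite with trace one. -/
def IsDensityMatrix {n : ℕ} (ρ : Matrix (Fin n) (Fin n) ℂ) : Prop :=
  ρ.PosSemidef ∧ ρ.trace = 1

/-- The rank-one projection `ψ ψ*` associated to a vector `ψ ∈ ℂⁿ`. -/
def outer {n : ℕ} (ψ : Fin n → ℂ) : Matrix (Fin n) (Fin n) ℂ :=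
  Matrix.vecMulVec ψ (fun i => starRingEnd ℂ (ψ i))

/-- `(p, ψ)` is a pure state decomposition of `ρ`. -/
def IsDecomposition {n m : ℕ} (ρ : Matrix (Fin n) (Fin n) ℂ)
    (p : Fin m → ℝ) (ψ : Fin m → Fin n → ℂ) : Prop :=
  (∀ k, 0 ≤ p k) ∧ (∑ k, p k = 1) ∧ (∀ k, ∑ i, ‖ψ k i‖ ^ 2 = 1) ∧
    ρ = ∑ k, (p k : ℂ) • outer (ψ k)

/-- The coherence vector `(|ψ₀|², …, |ψ_{n-1}|²)` of a vector `ψ`. -/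
def cohVec {n : ℕ} (ψ : Fin n → ℂ) : Fin n → ℝ := fun i => ‖ψ i‖ ^ 2

/-- The average coherence of a pure state decomposition with respect to `f`. -/
def avgCoh {n m : ℕ} (f : (Fin n → ℝ) → ℝ) (p : Fin m → ℝ)
    (ψ : Fin m → Fin n → ℂ) : ℝ :=
  ∑ k, p k * f (cohVec (ψ k))

/-!
The diagonal of `ρ` is the `p`-weighted mixture of the coherence vectors of the `ψ k`, each of
which lies in the probability simplex, so the inequality is Jensen's inequality for the concave `f`.
-/

section Coherence

variable {n m : ℕ}

lemma cohVec_mem_stdSimplex {ψ : Fin n → ℂ} (hψ : ∑ i, ‖ψ i‖ ^ 2 = 1) :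
    cohVec ψ ∈ stdSimplex ℝ (Fin n) :=
  ⟨fun _ => sq_nonneg _, hψ⟩

lemma re_outer_apply_self (ψ : Fin n → ℂ) (i : Fin n) : (outer ψ i i).re = cohVec ψ i := by
  rw [outer, vecMulVec_apply, Complex.mul_conj, Complex.ofReal_re, Complex.normSq_eq_norm_sq,
    cohVec]

lemma re_diag_sum_smul_outer (p : Fin m → ℝ) (ψ : Fin m → Fin n → ℂ) :
    (fun i => ((∑ k, (p k : ℂ) • outer (ψ k)) i i).re) = ∑ k, p k • cohVec (ψ k) := by
  funext i
  simp only [Matrix.sum_apply, Matrix.smul_apply, Complex.re_sum, Finset.sum_apply, Pi.smul_apply,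
    smul_eq_mul, Complex.re_ofReal_mul, re_outer_apply_self]

end Coherence

theorem avg_coherence_le_f_diag_general {n : ℕ}
    (f : (Fin n → ℝ) → ℝ)
    (hconc : ConcaveOn ℝ (stdSimplex ℝ (Fin n)) f)
    (ρ : Matrix (Fin n) (Fin n) ℂ)
    {m : ℕ} (p : Fin m → ℝ) (ψ : Fin m → Fin n → ℂ)
    (hdec : IsDecomposition ρ p ψ) :
    avgCoh f p ψ ≤ f (fun i => (ρ i i).re) := by
  obtain ⟨hp, hsum, hnorm, rfl⟩ := hdec
  rw [re_diag_sum_smul_outer]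
  simpa only [avgCoh, smul_eq_mul] using
    hconc.le_map_sum (fun k _ => hp k) hsum (fun k _ => cohVec_mem_stdSimplex (hnorm k))

/-- Theorem 1 (inequality part): the average coherence of any pure state
decomposition of `ρ` is bounded above by `f(ρ₀₀, …, ρ_{n-1,n-1})`. -/
theorem avg_coherence_le_f_diag {n : ℕ} (hn : 1 ≤ n)
    (f : (Fin n → ℝ) → ℝ) (hsym : SymmetricFn f)
    (hconc : ConcaveOn ℝ (stdSimplex ℝ (Fin n)) f)
    (ρ : Matrix (Fin n) (Fin n) ℂ) (hρ : IsDensityMatrix ρ)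
    {m : ℕ} (p : Fin m → ℝ) (ψ : Fin m → Fin n → ℂ)
    (hdec : IsDecomposition ρ p ψ) :
    avgCoh f p ψ ≤ f (fun i => (ρ i i).re) :=
  avg_coherence_le_f_diag_general f hconc ρ p ψ hdec
end
end

section
/- Let ρ be an n×n density matrix with all diagonal entries ρ_ii > 0, and let CM(ρ) = Δ(ρ)^{−1/2} ρ Δ(ρ)^{−1/2}, where Δ(ρ) is the diagonal matrix with the same diagonal as ρ. Suppose CM(ρ) = Σ_k p_k v_k v_k* where p_k ≥ 0, Σ_k p_k = 1, and each v_k ∈ ℂⁿ satisfies |v_k(i)| = 1 for every i (a convex combination of rank-one correlation matrices). Then the vectors ψ_k := Δ(ρ)^{1/2} v_k are unit vectors giving a pure state decomposition ρ = Σ_k p_k ψ_k ψ_k* with |ψ_k(i)|² = ρ_ii for all k, i; consequently, for every symmetric concave f on the probability simplex, the average coherence of this decomposition equals f(ρ₀₀, …, ρ_{n−1,n−1}). (Theorem 2.) -/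
open Matrix BigOperators
open scoped ComplexOrder

noncomputable section

/-- Theorem 2: if the correlation matrix `CM(ρ) = Δ(ρ)^{-1/2} ρ Δ(ρ)^{-1/2}` is a
convex combination of rank-one correlation matrices `v_k v_k*` (with `|v_k(i)| = 1`),
then `ψ_k := Δ(ρ)^{1/2} v_k` gives a pure state decomposition of `ρ` in which every
pure state has the same diagonal as `ρ`; consequently the average coherence of this
decomposition equals `f(ρ₀₀, …, ρ_{n-1,n-1})` for every symmetric concave `f`. -/
theorem decomposition_of_CM_convex_combination {n : ℕ}
    (ρ : Matrix (Fin n) (Fin n) ℂ) (hρ : IsDensityMatrix ρ)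
    (hdiag : ∀ i, 0 < (ρ i i).re)
    {m : ℕ} (p : Fin m → ℝ) (v : Fin m → Fin n → ℂ)
    (hp : ∀ k, 0 ≤ p k) (hps : ∑ k, p k = 1)
    (hv : ∀ k i, ‖v k i‖ = 1)
    (hCM : Matrix.diagonal (fun i => ((Real.sqrt ((ρ i i).re))⁻¹ : ℂ)) * ρ *
        Matrix.diagonal (fun i => ((Real.sqrt ((ρ i i).re))⁻¹ : ℂ)) =
      ∑ k, (p k : ℂ) • outer (v k)) :
    IsDecomposition ρ p (fun k i => (Real.sqrt ((ρ i i).re) : ℂ) * v k i) ∧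
    (∀ k i, ‖(Real.sqrt ((ρ i i).re) : ℂ) * v k i‖ ^ 2 = (ρ i i).re) ∧
    ∀ f : (Fin n → ℝ) → ℝ, SymmetricFn f → ConcaveOn ℝ (stdSimplex ℝ (Fin n)) f →
      avgCoh f p (fun k i => (Real.sqrt ((ρ i i).re) : ℂ) * v k i) =
        f (fun i => (ρ i i).re) := by
  have hnorm : ∀ k i, ‖(Real.sqrt ((ρ i i).re) : ℂ) * v k i‖ ^ 2 = (ρ i i).re := by
    intro k i
    rw [norm_mul, hv k i, mul_one, Complex.norm_real, Real.norm_eq_abs,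
      abs_of_nonneg (Real.sqrt_nonneg _), Real.sq_sqrt (hdiag i).le]
  have htr : ∑ i, (ρ i i).re = 1 := by
    have h1 : ∑ i, ρ i i = 1 := by simpa [Matrix.trace, Matrix.diag] using hρ.2
    calc ∑ i, (ρ i i).re = (∑ i, ρ i i).re := by rw [Complex.re_sum]
      _ = 1 := by rw [h1]; simp
  have hd0 : ∀ i, (Real.sqrt ((ρ i i).re) : ℂ) ≠ 0 := by
    intro i
    exact_mod_cast Complex.ofReal_ne_zero.mpr (Real.sqrt_pos.mpr (hdiag i)).ne'
  have hρeq : ρ = ∑ k, (p k : ℂ) •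
      outer ((fun k i => (Real.sqrt ((ρ i i).re) : ℂ) * v k i) k) := by
    ext i j
    have h := congrFun (congrFun hCM i) j
    rw [Matrix.mul_diagonal, Matrix.diagonal_mul] at h
    have h2 : ρ i j = (Real.sqrt ((ρ i i).re) : ℂ) *
        ((∑ k, (p k : ℂ) • outer (v k)) i j) * (Real.sqrt ((ρ j j).re) : ℂ) := by
      rw [← h]
      field_simp [hd0 i, hd0 j]
    rw [h2]
    simp only [Matrix.sum_apply, Matrix.smul_apply, outer, Matrix.vecMulVec_apply,
      smul_eq_mul, _root_.map_mul, Complex.conj_ofReal]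
    rw [Finset.mul_sum, Finset.sum_mul]
    refine Finset.sum_congr rfl fun k _ => ?_
    ring
  refine ⟨⟨hp, hps, fun k => ?_, hρeq⟩, hnorm, fun f _ _ => ?_⟩
  · simp only [hnorm]; exact htr
  · have hcoh : ∀ k, cohVec ((fun k i => (Real.sqrt ((ρ i i).re) : ℂ) * v k i) k)
        = fun i => (ρ i i).re := by
      intro k; funext i; simpa [cohVec] using hnorm k i
    simp only [avgCoh, hcoh]
    rw [← Finset.sum_mul, hps, one_mul]
end
end

section
/- Let ρ be an n×n density matrix with all diagonal entries ρ_ii > 0. Then there exists a pure state decomposition {(p_k, ψ_k)} of ρ with |ψ_k(i)|² = ρ_ii for every k and i if and only if the matrix CM(ρ) = Δ(ρ)^{−1/2} ρ Δ(ρ)^{−1/2} can be written as a convex combination Σ_k p_k v_k v_k* of rank-one correlation matrices (each v_k ∈ ℂⁿ with |v_k(i)| = 1 for all i). (Equivalence of the saturation conditions in Theorems 1 and 2.) -/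
open Matrix BigOperators
open scoped ComplexOrder

noncomputable section

/-- Equivalence of the saturation conditions of Theorems 1 and 2: `ρ` has a pure
state decomposition in which every pure state has the same diagonal as `ρ` iff
`CM(ρ) = Δ(ρ)^{-1/2} ρ Δ(ρ)^{-1/2}` is a convex combination of rank-one
correlation matrices. -/
theorem same_diag_decomposition_iff_CM_convex_combination {n : ℕ}
    (ρ : Matrix (Fin n) (Fin n) ℂ) (hρ : IsDensityMatrix ρ)
    (hdiag : ∀ i, 0 < (ρ i i).re) :
    (∃ (m : ℕ) (p : Fin m → ℝ) (ψ : Fin m → Fin n → ℂ),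
        IsDecomposition ρ p ψ ∧ ∀ k i, ‖ψ k i‖ ^ 2 = (ρ i i).re) ↔
    (∃ (m : ℕ) (p : Fin m → ℝ) (v : Fin m → Fin n → ℂ),
        (∀ k, 0 ≤ p k) ∧ (∑ k, p k = 1) ∧ (∀ k i, ‖v k i‖ = 1) ∧
        Matrix.diagonal (fun i => ((Real.sqrt ((ρ i i).re))⁻¹ : ℂ)) * ρ *
            Matrix.diagonal (fun i => ((Real.sqrt ((ρ i i).re))⁻¹ : ℂ)) =
          ∑ k, (p k : ℂ) • outer (v k)) := by
  have hspos : ∀ i, 0 < Real.sqrt ((ρ i i).re) := fun i => Real.sqrt_pos.2 (hdiag i)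
  have hsne : ∀ i, ((Real.sqrt ((ρ i i).re) : ℝ) : ℂ) ≠ 0 := fun i =>
    Complex.ofReal_ne_zero.2 (ne_of_gt (hspos i))
  have hssq : ∀ i, Real.sqrt ((ρ i i).re) * Real.sqrt ((ρ i i).re) = (ρ i i).re :=
    fun i => Real.mul_self_sqrt (le_of_lt (hdiag i))
  have hLHS : ∀ i j, (Matrix.diagonal (fun i => ((Real.sqrt ((ρ i i).re))⁻¹ : ℂ)) * ρ *
      Matrix.diagonal (fun i => ((Real.sqrt ((ρ i i).re))⁻¹ : ℂ))) i j
      = ((Real.sqrt ((ρ i i).re) : ℂ))⁻¹ * ρ i j * ((Real.sqrt ((ρ j j).re) : ℂ))⁻¹ := by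
    intro i j
    rw [Matrix.mul_diagonal, Matrix.diagonal_mul]
  constructor
  · rintro ⟨m, p, ψ, ⟨hp, hsum, -, hρeq⟩, hnorm⟩
    refine ⟨m, p, fun k i => ψ k i / (Real.sqrt ((ρ i i).re) : ℂ), hp, hsum, ?_, ?_⟩
    · intro k i
      have h1 : ‖ψ k i‖ = Real.sqrt ((ρ i i).re) := by
        rw [← hnorm k i, Real.sqrt_sq (norm_nonneg _)]
      rw [norm_div, h1, Complex.norm_real, Real.norm_eq_abs,
        abs_of_pos (hspos i), div_self (ne_of_gt (hspos i))]
    · funext i j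
      have hρij : ρ i j = ∑ k, (p k : ℂ) * (ψ k i * starRingEnd ℂ (ψ k j)) := by
        rw [hρeq]
        simp [outer, Matrix.vecMulVec_apply, Matrix.sum_apply]
      rw [hLHS i j, hρij]
      simp only [Matrix.sum_apply, Matrix.smul_apply, outer,
        Matrix.vecMulVec_apply, smul_eq_mul, map_div₀, Complex.conj_ofReal]
      rw [Finset.mul_sum, Finset.sum_mul]
      apply Finset.sum_congr rfl
      intro k _
      field_simp
  · rintro ⟨m, p, v, hp, hsum, hnorm, hCM⟩
    have htr : ∑ i, (ρ i i).re = 1 := by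
      have h1 : (∑ i, ρ i i) = 1 := hρ.2
      have h2 : (∑ i, ρ i i).re = (1 : ℂ).re := by rw [h1]
      rw [Complex.re_sum] at h2
      simpa using h2
    refine ⟨m, p, fun k i => (Real.sqrt ((ρ i i).re) : ℂ) * v k i, ⟨hp, hsum, ?_, ?_⟩, ?_⟩
    · intro k
      have h3 : ∀ i, ‖(Real.sqrt ((ρ i i).re) : ℂ) * v k i‖ ^ 2 = (ρ i i).re := by
        intro i
        rw [norm_mul, hnorm k i, mul_one, Complex.norm_real, Real.norm_eq_abs,
          abs_of_pos (hspos i), sq, hssq]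
      simp only [h3]; exact htr
    · funext i j
      have hCMij := congrFun (congrFun hCM i) j
      rw [hLHS i j] at hCMij
      have key : ((Real.sqrt ((ρ i i).re) : ℝ) : ℂ) *
          (((Real.sqrt ((ρ i i).re) : ℂ))⁻¹ * ρ i j * ((Real.sqrt ((ρ j j).re) : ℂ))⁻¹) *
          ((Real.sqrt ((ρ j j).re) : ℝ) : ℂ) = ρ i j := by
        have e : ((Real.sqrt ((ρ i i).re) : ℝ) : ℂ) *
            (((Real.sqrt ((ρ i i).re) : ℂ))⁻¹ * ρ i j * ((Real.sqrt ((ρ j j).re) : ℂ))⁻¹) *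
            ((Real.sqrt ((ρ j j).re) : ℝ) : ℂ) =
            (((Real.sqrt ((ρ i i).re) : ℂ)) * ((Real.sqrt ((ρ i i).re) : ℂ))⁻¹) * ρ i j *
            ((((Real.sqrt ((ρ j j).re) : ℂ))⁻¹ * ((Real.sqrt ((ρ j j).re) : ℂ)))) := by ring
        rw [e, mul_inv_cancel₀ (hsne i), inv_mul_cancel₀ (hsne j), one_mul, mul_one]
      rw [← key, hCMij]
      simp only [Matrix.sum_apply, Matrix.smul_apply, outer,
        Matrix.vecMulVec_apply, smul_eq_mul, _root_.map_mul, Complex.conj_ofReal]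
      rw [Finset.mul_sum, Finset.sum_mul]
      apply Finset.sum_congr rfl
      intro k _
      ring
    · intro k i
      rw [norm_mul, hnorm k i, mul_one, Complex.norm_real, Real.norm_eq_abs,
        abs_of_pos (hspos i), sq, hssq]
end
end

section
/- Let ρ be a 2×2 density matrix with ρ₀₀ > 0 and ρ₁₁ > 0, and let ω ∈ ℂ with |ω| = 1 be such that ρ₀₁ = |ρ₀₁| ω (so ω̄ = e^{−i arg ρ₀₁} when ρ₀₁ ≠ 0). Define the unit vectors ψ₁ = (√ρ₀₀, ω̄ √ρ₁₁)ᵀ and ψ₂ = (√ρ₀₀, −ω̄ √ρ₁₁)ᵀ and the weights p₁ = (1 + |ρ₀₁|/√(ρ₀₀ρ₁₁))/2, p₂ = (1 − |ρ₀₁|/√(ρ₀₀ρ₁₁))/2. Then 0 ≤ p₂ ≤ p₁ ≤ 1, p₁ + p₂ = 1, ρ = p₁ ψ₁ψ₁* + p₂ ψ₂ψ₂*, and |ψ_k(i)|² = ρ_ii for k = 1, 2 and i = 0, 1; hence this decomposition attains the maximal average coherence f(ρ₀₀, ρ₁₁) for every symmetric concave f on Ω₂. (Example 1.) -/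
/-!
Positive semidefiniteness of `ρ` bounds `|ρ₀₁|` by `√(ρ₀₀ ρ₁₁)` (the `2 × 2` principal minor is
nonnegative), so `p₁, p₂` are probability weights, and expanding `p₁ ψ₁ψ₁* + p₂ ψ₂ψ₂*` entrywise
gives back `ρ`. For any pure state decomposition the coherence vectors `(|ψ_k(i)|²)ᵢ` average to
the diagonal of `ρ`, so by Jensen's inequality the average coherence with respect to a concave `f`
is at most `f(ρ₀₀, ρ₁₁)`; a decomposition all of whose states have the diagonal of `ρ` as coherence
vector attains this bound.
-/

open Matrix BigOperators
open scoped ComplexOrder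

noncomputable section

theorem Matrix.PosSemidef.norm_apply_sq_le {n : Type*} [Fintype n] {A : Matrix n n ℂ}
    (hA : A.PosSemidef) (i j : n) : ‖A i j‖ ^ 2 ≤ (A i i).re * (A j j).re := by
  have hdet := (hA.submatrix ![i, j]).det_nonneg
  rw [det_fin_two] at hdet
  simp only [submatrix_apply, Matrix.cons_val_zero, Matrix.cons_val_one] at hdet
  rw [← hA.1.apply j i, Complex.star_def, Complex.mul_conj',
    ← hA.1.coe_re_apply_self i, ← hA.1.coe_re_apply_self j] at hdet
  have hreal : (0 : ℂ) ≤ (((A i i).re * (A j j).re - ‖A i j‖ ^ 2 : ℝ) : ℂ) := by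
    push_cast
    exact hdet
  exact sub_nonneg.mp (Complex.zero_le_real.mp hreal)

theorem Matrix.PosSemidef.norm_apply_le_sqrt_mul {n : Type*} [Fintype n] {A : Matrix n n ℂ}
    (hA : A.PosSemidef) (i j : n) : ‖A i j‖ ≤ √((A i i).re * (A j j).re) :=
  Real.le_sqrt_of_sq_le (hA.norm_apply_sq_le i j)

theorem outer_apply_self {n : ℕ} (ψ : Fin n → ℂ) (i : Fin n) :
    outer ψ i i = ((‖ψ i‖ ^ 2 : ℝ) : ℂ) := by
  simp [outer, vecMulVec_apply, Complex.mul_conj']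

theorem Matrix.IsHermitian.eq_smul_outer_add_smul_outer_neg {ρ : Matrix (Fin 2) (Fin 2) ℂ}
    (hρ : ρ.IsHermitian) {p₁ p₂ : ℝ} (hp : p₁ + p₂ = 1) {x y : ℂ}
    (hx : x * starRingEnd ℂ x = ρ 0 0) (hy : y * starRingEnd ℂ y = ρ 1 1)
    (hxy : (p₁ - p₂ : ℂ) * (x * starRingEnd ℂ y) = ρ 0 1) :
    ρ = (p₁ : ℂ) • outer ![x, y] + (p₂ : ℂ) • outer ![x, -y] := by
  have hpc : (p₁ : ℂ) + p₂ = 1 := by exact_mod_cast hp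
  have hyx : (p₁ - p₂ : ℂ) * (y * starRingEnd ℂ x) = ρ 1 0 := by
    rw [← hρ.apply 1 0, ← hxy]
    simp only [star_mul', Complex.star_def, map_sub, Complex.conj_ofReal, Complex.conj_conj]
    ring
  ext i j
  simp only [Matrix.add_apply, Matrix.smul_apply, outer, Matrix.vecMulVec_apply, smul_eq_mul]
  fin_cases i <;> fin_cases j <;> simp
  · linear_combination -hx - x * starRingEnd ℂ x * hpc
  · linear_combination -hxy
  · linear_combination -hyx
  · linear_combination -hy - y * starRingEnd ℂ y * hpc

theorem Matrix.IsHermitian.eq_smul_outer_add_smul_outer_of_eq_norm_mul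
    {ρ : Matrix (Fin 2) (Fin 2) ℂ} (hρ : ρ.IsHermitian) (h00 : 0 ≤ (ρ 0 0).re)
    (h11 : 0 ≤ (ρ 1 1).re) {ω : ℂ} (hω : ‖ω‖ = 1) (harg : ρ 0 1 = (‖ρ 0 1‖ : ℂ) * ω) {q : ℝ}
    (hq : q * √((ρ 0 0).re * (ρ 1 1).re) = ‖ρ 0 1‖) :
    ρ = (((1 + q) / 2 : ℝ) : ℂ) •
          outer ![(√(ρ 0 0).re : ℂ), starRingEnd ℂ ω * (√(ρ 1 1).re : ℂ)] +
        (((1 - q) / 2 : ℝ) : ℂ) •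
          outer ![(√(ρ 0 0).re : ℂ), -(starRingEnd ℂ ω * (√(ρ 1 1).re : ℂ))] := by
  refine hρ.eq_smul_outer_add_smul_outer_neg (by ring) ?_ ?_ ?_
  · rw [Complex.conj_ofReal, ← Complex.ofReal_mul, Real.mul_self_sqrt h00]
    exact hρ.coe_re_apply_self 0
  · calc _ = ω * starRingEnd ℂ ω * ((√(ρ 1 1).re * √(ρ 1 1).re : ℝ) : ℂ) := by
          simp only [map_mul, Complex.conj_conj, Complex.conj_ofReal]
          push_cast
          ring
      _ = ρ 1 1 := by
          rw [Complex.mul_conj', hω, Real.mul_self_sqrt h11]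
          simpa using hρ.coe_re_apply_self 1
  · rw [harg, ← hq, Real.sqrt_mul h00]
    simp only [map_mul, Complex.conj_conj, Complex.conj_ofReal]
    push_cast
    ring

theorem IsDensityMatrix.sum_re_diag {n : ℕ} {ρ : Matrix (Fin n) (Fin n) ℂ}
    (hρ : IsDensityMatrix ρ) : ∑ i, (ρ i i).re = 1 := by
  simpa [Matrix.trace, Complex.re_sum] using congrArg Complex.re hρ.2

theorem IsDensityMatrix.isDecomposition_of_cohVec_eq {n m : ℕ} {ρ : Matrix (Fin n) (Fin n) ℂ}
    {p : Fin m → ℝ} {ψ : Fin m → Fin n → ℂ} (hρ : IsDensityMatrix ρ) (hp₀ : ∀ k, 0 ≤ p k)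
    (hp : ∑ k, p k = 1) (hψ : ∀ k, cohVec (ψ k) = fun i => (ρ i i).re)
    (hsum : ρ = ∑ k, (p k : ℂ) • outer (ψ k)) : IsDecomposition ρ p ψ := by
  refine ⟨hp₀, hp, fun k => ?_, hsum⟩
  rw [← hρ.sum_re_diag]
  exact Finset.sum_congr rfl fun i _ => congrFun (hψ k) i

theorem avgCoh_eq_of_forall_cohVec_eq {n m : ℕ} (f : (Fin n → ℝ) → ℝ) {p : Fin m → ℝ}
    {ψ : Fin m → Fin n → ℂ} {x : Fin n → ℝ} (hp : ∑ k, p k = 1) (hψ : ∀ k, cohVec (ψ k) = x) :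
    avgCoh f p ψ = f x := by
  simp only [avgCoh, hψ, ← Finset.sum_mul, hp, one_mul]

namespace IsDecomposition

variable {n m : ℕ} {ρ : Matrix (Fin n) (Fin n) ℂ} {p : Fin m → ℝ} {ψ : Fin m → Fin n → ℂ}

theorem sum_smul_cohVec (h : IsDecomposition ρ p ψ) :
    ∑ k, p k • cohVec (ψ k) = fun i => (ρ i i).re := by
  funext i
  rw [h.2.2.2]
  simp [Matrix.sum_apply, outer_apply_self, cohVec, Complex.re_sum]
  norm_cast

theorem cohVec_mem_stdSimplex (h : IsDecomposition ρ p ψ) (k : Fin m) :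
    cohVec (ψ k) ∈ stdSimplex ℝ (Fin n) :=
  ⟨fun _ => sq_nonneg _, h.2.2.1 k⟩

theorem avgCoh_le {f : (Fin n → ℝ) → ℝ} (hf : ConcaveOn ℝ (stdSimplex ℝ (Fin n)) f)
    (h : IsDecomposition ρ p ψ) : avgCoh f p ψ ≤ f (fun i => (ρ i i).re) := by
  rw [← h.sum_smul_cohVec]
  exact hf.le_map_sum (fun k _ => h.1 k) h.2.1 (fun k _ => h.cohVec_mem_stdSimplex k)

theorem isGreatest_avgCoh_of_cohVec_eq {f : (Fin n → ℝ) → ℝ}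
    (hf : ConcaveOn ℝ (stdSimplex ℝ (Fin n)) f) (h : IsDecomposition ρ p ψ)
    (hψ : ∀ k, cohVec (ψ k) = fun i => (ρ i i).re) :
    IsGreatest {c : ℝ | ∃ (m : ℕ) (p : Fin m → ℝ) (ψ : Fin m → Fin n → ℂ),
        IsDecomposition ρ p ψ ∧ c = avgCoh f p ψ} (avgCoh f p ψ) := by
  refine ⟨⟨m, p, ψ, h, rfl⟩, ?_⟩
  rintro c ⟨m', p', ψ', h', rfl⟩
  rw [avgCoh_eq_of_forall_cohVec_eq f h.2.1 hψ]
  exact h'.avgCoh_le hf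

end IsDecomposition

/-- Example 1: explicit optimal pure state decomposition of a qubit density matrix
with positive diagonal. With `ω` a unimodular number such that `ρ₀₁ = |ρ₀₁| ω`,
the states `ψ₁ = (√ρ₀₀, ω̄ √ρ₁₁)`, `ψ₂ = (√ρ₀₀, −ω̄ √ρ₁₁)` with weights
`p₁ = (1 + |ρ₀₁|/√(ρ₀₀ρ₁₁))/2`, `p₂ = (1 − |ρ₀₁|/√(ρ₀₀ρ₁₁))/2` decompose `ρ`,
share its diagonal, and attain the maximal average coherence `f(ρ₀₀, ρ₁₁)`. -/
theorem example_one_qubit_optimal_decomposition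
    (ρ : Matrix (Fin 2) (Fin 2) ℂ) (hρ : IsDensityMatrix ρ)
    (h00 : 0 < (ρ 0 0).re) (h11 : 0 < (ρ 1 1).re)
    (ω : ℂ) (hω : ‖ω‖ = 1) (harg : ρ 0 1 = (‖ρ 0 1‖ : ℂ) * ω) :
    let ψ₁ : Fin 2 → ℂ :=
      ![(Real.sqrt ((ρ 0 0).re) : ℂ),
        starRingEnd ℂ ω * (Real.sqrt ((ρ 1 1).re) : ℂ)]
    let ψ₂ : Fin 2 → ℂ :=
      ![(Real.sqrt ((ρ 0 0).re) : ℂ),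
        -(starRingEnd ℂ ω * (Real.sqrt ((ρ 1 1).re) : ℂ))]
    let p₁ : ℝ := (1 + ‖ρ 0 1‖ / Real.sqrt ((ρ 0 0).re * (ρ 1 1).re)) / 2
    let p₂ : ℝ := (1 - ‖ρ 0 1‖ / Real.sqrt ((ρ 0 0).re * (ρ 1 1).re)) / 2
    (0 ≤ p₂ ∧ p₂ ≤ p₁ ∧ p₁ ≤ 1) ∧ p₁ + p₂ = 1 ∧
    ρ = (p₁ : ℂ) • outer ψ₁ + (p₂ : ℂ) • outer ψ₂ ∧
    (∀ i, ‖ψ₁ i‖ ^ 2 = (ρ i i).re) ∧ (∀ i, ‖ψ₂ i‖ ^ 2 = (ρ i i).re) ∧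
    ∀ f : (Fin 2 → ℝ) → ℝ, SymmetricFn f → ConcaveOn ℝ (stdSimplex ℝ (Fin 2)) f →
      p₁ * f (cohVec ψ₁) + p₂ * f (cohVec ψ₂) = f (fun i => (ρ i i).re) ∧
      IsGreatest {c : ℝ | ∃ (m : ℕ) (p : Fin m → ℝ) (ψ : Fin m → Fin 2 → ℂ),
          IsDecomposition ρ p ψ ∧ c = avgCoh f p ψ}
        (p₁ * f (cohVec ψ₁) + p₂ * f (cohVec ψ₂)) := by
  intro ψ₁ ψ₂ p₁ p₂
  set q := ‖ρ 0 1‖ / √((ρ 0 0).re * (ρ 1 1).re)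
  have hp₁ : p₁ = (1 + q) / 2 := rfl
  have hp₂ : p₂ = (1 - q) / 2 := rfl
  have hq₀ : 0 ≤ q := by positivity
  have hq₁ : q ≤ 1 := div_le_one_of_le₀ (hρ.1.norm_apply_le_sqrt_mul 0 1) (Real.sqrt_nonneg _)
  have hp : p₁ + p₂ = 1 := by rw [hp₁, hp₂]; ring
  have hψ₁ : ∀ i, ‖ψ₁ i‖ ^ 2 = (ρ i i).re := by
    simp [Fin.forall_fin_two, ψ₁, hω, Real.sq_sqrt h00.le, Real.sq_sqrt h11.le]
  have hψ₂ : ∀ i, ‖ψ₂ i‖ ^ 2 = (ρ i i).re := by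
    simp [Fin.forall_fin_two, ψ₂, hω, Real.sq_sqrt h00.le, Real.sq_sqrt h11.le]
  have hdec : ρ = (p₁ : ℂ) • outer ψ₁ + (p₂ : ℂ) • outer ψ₂ :=
    hρ.1.1.eq_smul_outer_add_smul_outer_of_eq_norm_mul h00.le h11.le hω harg
      (div_mul_cancel₀ _ (by positivity))
  refine ⟨⟨by linarith, by linarith, by linarith⟩, hp, hdec, hψ₁, hψ₂, fun f _ hf => ?_⟩
  have hcoh : ∀ k, cohVec (![ψ₁, ψ₂] k) = fun i => (ρ i i).re := by
    simp [Fin.forall_fin_two, cohVec, funext_iff, hψ₁, hψ₂]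
  have hdec' : IsDecomposition ρ ![p₁, p₂] ![ψ₁, ψ₂] :=
    hρ.isDecomposition_of_cohVec_eq
      (Fin.forall_fin_two.2 ⟨by simp; linarith, by simp; linarith⟩) (by simpa using hp) hcoh
      (by simpa using hdec)
  have havg : avgCoh f ![p₁, p₂] ![ψ₁, ψ₂] = p₁ * f (cohVec ψ₁) + p₂ * f (cohVec ψ₂) := by
    simp [avgCoh]
  exact havg ▸ ⟨avgCoh_eq_of_forall_cohVec_eq f hdec'.2.1 hcoh,
    hdec'.isGreatest_avgCoh_of_cohVec_eq hf hcoh⟩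
end
end

section
/- The function f : ℝⁿ → ℝ defined by f(x) = Σ_{i ≠ j} √(x_i x_j) (equivalently f(x) = (Σ_i √x_i)² − 1 on the simplex) is strictly concave on the probability simplex Ωₙ: for all x ≠ y in Ωₙ and all 0 < λ < 1, f(λx + (1−λ)y) > λ f(x) + (1−λ) f(y). (The symmetric concave function underlying the l₁ norm of coherence and the coherence concurrence on pure states.) -/
open BigOperators

noncomputable section

private lemma sqrt_key_le {a b c d l m : ℝ} (ha : 0 ≤ a) (hb : 0 ≤ b) (hc : 0 ≤ c) (hd : 0 ≤ d)
    (hl : 0 ≤ l) (hm : 0 ≤ m) :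
    l * Real.sqrt (a * b) + m * Real.sqrt (c * d)
      ≤ Real.sqrt ((l * a + m * c) * (l * b + m * d)) := by
  have hR : 0 ≤ l * Real.sqrt (a * b) + m * Real.sqrt (c * d) := by positivity
  rw [show (l * Real.sqrt (a*b) + m * Real.sqrt (c*d))
      = Real.sqrt ((l * Real.sqrt (a*b) + m * Real.sqrt (c*d))^2) from (Real.sqrt_sq hR).symm]
  apply Real.sqrt_le_sqrt
  have h1 : Real.sqrt (a*b) * Real.sqrt (c*d) = Real.sqrt (a*d) * Real.sqrt (c*b) := by
    rw [← Real.sqrt_mul (by positivity), ← Real.sqrt_mul (by positivity)]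
    ring_nf
  have expand : (l*a+m*c)*(l*b+m*d) - (l*Real.sqrt (a*b)+m*Real.sqrt (c*d))^2
      = l*m*(Real.sqrt (a*d)-Real.sqrt (c*b))^2 := by
    linear_combination (-l^2) * Real.sq_sqrt (mul_nonneg ha hb)
      + (-m^2) * Real.sq_sqrt (mul_nonneg hc hd)
      + (-(l*m)) * Real.sq_sqrt (mul_nonneg ha hd)
      + (-(l*m)) * Real.sq_sqrt (mul_nonneg hc hb)
      + (-2*l*m) * h1
  nlinarith [mul_nonneg (mul_nonneg hl hm) (sq_nonneg (Real.sqrt (a*d) - Real.sqrt (c*b)))]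

private lemma sqrt_key_lt {a b c d l m : ℝ} (ha : 0 ≤ a) (hb : 0 ≤ b) (hc : 0 ≤ c) (hd : 0 ≤ d)
    (hl : 0 < l) (hm : 0 < m) (hne : a * d ≠ c * b) :
    l * Real.sqrt (a * b) + m * Real.sqrt (c * d)
      < Real.sqrt ((l * a + m * c) * (l * b + m * d)) := by
  have hR : 0 ≤ l * Real.sqrt (a * b) + m * Real.sqrt (c * d) := by positivity
  rw [show (l * Real.sqrt (a*b) + m * Real.sqrt (c*d))
      = Real.sqrt ((l * Real.sqrt (a*b) + m * Real.sqrt (c*d))^2) from (Real.sqrt_sq hR).symm]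
  apply Real.sqrt_lt_sqrt (by positivity)
  have h1 : Real.sqrt (a*b) * Real.sqrt (c*d) = Real.sqrt (a*d) * Real.sqrt (c*b) := by
    rw [← Real.sqrt_mul (by positivity), ← Real.sqrt_mul (by positivity)]
    ring_nf
  have expand : (l*a+m*c)*(l*b+m*d) - (l*Real.sqrt (a*b)+m*Real.sqrt (c*d))^2
      = l*m*(Real.sqrt (a*d)-Real.sqrt (c*b))^2 := by
    linear_combination (-l^2) * Real.sq_sqrt (mul_nonneg ha hb)
      + (-m^2) * Real.sq_sqrt (mul_nonneg hc hd)
      + (-(l*m)) * Real.sq_sqrt (mul_nonneg ha hd)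
      + (-(l*m)) * Real.sq_sqrt (mul_nonneg hc hb)
      + (-2*l*m) * h1
  have h2 : Real.sqrt (a*d) ≠ Real.sqrt (c*b) := by
    intro h
    apply hne
    have := congrArg (fun t => t ^ 2) h
    simpa [Real.sq_sqrt (mul_nonneg ha hd), Real.sq_sqrt (mul_nonneg hc hb)] using this
  have h3 : 0 < (Real.sqrt (a*d) - Real.sqrt (c*b))^2 :=
    lt_of_le_of_ne (sq_nonneg _) (Ne.symm (pow_ne_zero 2 (sub_ne_zero.mpr h2)))
  nlinarith [mul_pos (mul_pos hl hm) h3]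

/-- The symmetric concave function underlying the `l₁` norm of coherence and the
coherence concurrence on pure states, `f(x) = Σ_{i ≠ j} √(x_i x_j)`, is strictly
concave on the probability simplex `Ωₙ` for `n ≥ 2`. -/
theorem l1_coherence_function_strictConcaveOn {n : ℕ} (hn : 2 ≤ n) :
    StrictConcaveOn ℝ (stdSimplex ℝ (Fin n))
      (fun x : Fin n → ℝ =>
        ∑ i, ∑ j, if i ≠ j then Real.sqrt (x i * x j) else 0) := by
  refine ⟨convex_stdSimplex ℝ (Fin n), ?_⟩
  intro x hx y hy hxy l m hl hm hlm
  have hpair : ∃ i j, i ≠ j ∧ x i * y j ≠ x j * y i := by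
    by_contra h
    push_neg at h
    apply hxy
    funext i
    have hsum : ∑ j, x i * y j = ∑ j, x j * y i := by
      refine Finset.sum_congr rfl fun j _ => ?_
      by_cases hij : i = j
      · subst hij; ring
      · exact h i j hij
    rw [← Finset.mul_sum, hy.2, mul_one, ← Finset.sum_mul, hx.2, one_mul] at hsum
    exact hsum
  obtain ⟨i₀, j₀, hij₀, hcross⟩ := hpair
  show l * (∑ i, ∑ j, if i ≠ j then Real.sqrt (x i * x j) else 0)
        + m * (∑ i, ∑ j, if i ≠ j then Real.sqrt (y i * y j) else 0)
      < ∑ i, ∑ j, if i ≠ j then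
          Real.sqrt ((l * x i + m * y i) * (l * x j + m * y j)) else 0
  have key_le : ∀ i j : Fin n,
      l * (if i ≠ j then Real.sqrt (x i * x j) else 0)
        + m * (if i ≠ j then Real.sqrt (y i * y j) else 0)
      ≤ (if i ≠ j then Real.sqrt ((l * x i + m * y i) * (l * x j + m * y j)) else 0) := by
    intro i j
    by_cases hij : i ≠ j
    · rw [if_pos hij, if_pos hij, if_pos hij]
      exact sqrt_key_le (hx.1 i) (hx.1 j) (hy.1 i) (hy.1 j) hl.le hm.le
    · simp [hij]
  calc l * (∑ i, ∑ j, if i ≠ j then Real.sqrt (x i * x j) else 0)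
        + m * (∑ i, ∑ j, if i ≠ j then Real.sqrt (y i * y j) else 0)
      = ∑ i, ∑ j, (l * (if i ≠ j then Real.sqrt (x i * x j) else 0)
          + m * (if i ≠ j then Real.sqrt (y i * y j) else 0)) := by
        simp [Finset.mul_sum, ← Finset.sum_add_distrib]
    _ < ∑ i, ∑ j, (if i ≠ j then
          Real.sqrt ((l * x i + m * y i) * (l * x j + m * y j)) else 0) := by
        refine Finset.sum_lt_sum (fun i _ => Finset.sum_le_sum fun j _ => key_le i j)
          ⟨i₀, Finset.mem_univ _, ?_⟩
        refine Finset.sum_lt_sum (fun j _ => key_le i₀ j) ⟨j₀, Finset.mem_univ _, ?_⟩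
        rw [if_pos hij₀, if_pos hij₀, if_pos hij₀]
        refine sqrt_key_lt (hx.1 i₀) (hx.1 j₀) (hy.1 i₀) (hy.1 j₀) hl hm ?_
        rwa [mul_comm (x j₀) (y i₀)] at hcross
end
end

section
/- Let ρ be the qubit density matrix with Bloch parameters (n, θ, φ), 0 ≤ n < 1 or (n=1 and 0 < θ), with 0 ≤ θ ≤ π/2 and n sin θ < 1. Let θ₃ = arccos √(1 − n² sin²θ), and define ψ₁ = (cos(θ₃/2), e^{iφ} sin(θ₃/2))ᵀ, ψ₂ = (sin(θ₃/2), e^{iφ} cos(θ₃/2))ᵀ, with p₁ = (−1 + n² sin²θ − n cosθ √(1 − n² sin²θ)) / (−2 + 2 n² sin²θ) and p₂ = (−1 + n² sin²θ + n cosθ √(1 − n² sin²θ)) / (−2 + 2 n² sin²θ). Then p₁, p₂ ≥ 0, p₁ + p₂ = 1, ρ = p₁ ψ₁ψ₁* + p₂ ψ₂ψ₂*, and for every symmetric concave f on Ω₂ the average coherence of this decomposition D^(m₁) equals f(cos²(θ₃/2), sin²(θ₃/2)). -/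
open Matrix BigOperators
open scoped ComplexOrder

noncomputable section

/-- The Pauli matrices. -/
def pauli1 : Matrix (Fin 2) (Fin 2) ℂ := !![0, 1; 1, 0]
def pauli2 : Matrix (Fin 2) (Fin 2) ℂ := !![0, -Complex.I; Complex.I, 0]
def pauli3 : Matrix (Fin 2) (Fin 2) ℂ := !![1, 0; 0, -1]

/-- The qubit density matrix with Bloch parameters `(r, θ, φ)`:
`ρ = (1/2)(I + r sinθ cosφ σ₁ + r sinθ sinφ σ₂ + r cosθ σ₃)`. -/
def bloch (r θ φ : ℝ) : Matrix (Fin 2) (Fin 2) ℂ :=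
  (1 / 2 : ℂ) • ((1 : Matrix (Fin 2) (Fin 2) ℂ)
    + (r * Real.sin θ * Real.cos φ) • pauli1
    + (r * Real.sin θ * Real.sin φ) • pauli2
    + (r * Real.cos θ) • pauli3)

set_option maxHeartbeats 1000000 in
theorem aux_Dm1 (n θ φ : ℝ)
    (hn0 : 0 ≤ n) (hn1 : n ≤ 1) (hθ0 : 0 ≤ θ) (hθ1 : θ ≤ Real.pi / 2)
    (hns : n * Real.sin θ < 1) :
    (0 ≤ (-1 + n ^ 2 * Real.sin θ ^ 2
        - n * Real.cos θ * Real.sqrt (1 - n ^ 2 * Real.sin θ ^ 2)) /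
      (-2 + 2 * n ^ 2 * Real.sin θ ^ 2) ∧
     0 ≤ (-1 + n ^ 2 * Real.sin θ ^ 2
        + n * Real.cos θ * Real.sqrt (1 - n ^ 2 * Real.sin θ ^ 2)) /
      (-2 + 2 * n ^ 2 * Real.sin θ ^ 2)) ∧
    (-1 + n ^ 2 * Real.sin θ ^ 2
        - n * Real.cos θ * Real.sqrt (1 - n ^ 2 * Real.sin θ ^ 2)) /
      (-2 + 2 * n ^ 2 * Real.sin θ ^ 2) +
    (-1 + n ^ 2 * Real.sin θ ^ 2
        + n * Real.cos θ * Real.sqrt (1 - n ^ 2 * Real.sin θ ^ 2)) /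
      (-2 + 2 * n ^ 2 * Real.sin θ ^ 2) = 1 ∧
    bloch n θ φ =
      (((-1 + n ^ 2 * Real.sin θ ^ 2
        - n * Real.cos θ * Real.sqrt (1 - n ^ 2 * Real.sin θ ^ 2)) /
      (-2 + 2 * n ^ 2 * Real.sin θ ^ 2) : ℝ) : ℂ) • outer
        ![(Real.cos (Real.arccos (Real.sqrt (1 - n ^ 2 * Real.sin θ ^ 2)) / 2) : ℂ),
          Complex.exp (Complex.I * φ) *
            (Real.sin (Real.arccos (Real.sqrt (1 - n ^ 2 * Real.sin θ ^ 2)) / 2) : ℂ)] +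
      (((-1 + n ^ 2 * Real.sin θ ^ 2
        + n * Real.cos θ * Real.sqrt (1 - n ^ 2 * Real.sin θ ^ 2)) /
      (-2 + 2 * n ^ 2 * Real.sin θ ^ 2) : ℝ) : ℂ) • outer
        ![(Real.sin (Real.arccos (Real.sqrt (1 - n ^ 2 * Real.sin θ ^ 2)) / 2) : ℂ),
          Complex.exp (Complex.I * φ) *
            (Real.cos (Real.arccos (Real.sqrt (1 - n ^ 2 * Real.sin θ ^ 2)) / 2) : ℂ)] ∧
    ∀ f : (Fin 2 → ℝ) → ℝ, SymmetricFn f → ConcaveOn ℝ (stdSimplex ℝ (Fin 2)) f →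
      (-1 + n ^ 2 * Real.sin θ ^ 2
        - n * Real.cos θ * Real.sqrt (1 - n ^ 2 * Real.sin θ ^ 2)) /
      (-2 + 2 * n ^ 2 * Real.sin θ ^ 2) *
        f (cohVec ![(Real.cos (Real.arccos (Real.sqrt (1 - n ^ 2 * Real.sin θ ^ 2)) / 2) : ℂ),
          Complex.exp (Complex.I * φ) *
            (Real.sin (Real.arccos (Real.sqrt (1 - n ^ 2 * Real.sin θ ^ 2)) / 2) : ℂ)]) +
      (-1 + n ^ 2 * Real.sin θ ^ 2
        + n * Real.cos θ * Real.sqrt (1 - n ^ 2 * Real.sin θ ^ 2)) /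
      (-2 + 2 * n ^ 2 * Real.sin θ ^ 2) *
        f (cohVec ![(Real.sin (Real.arccos (Real.sqrt (1 - n ^ 2 * Real.sin θ ^ 2)) / 2) : ℂ),
          Complex.exp (Complex.I * φ) *
            (Real.cos (Real.arccos (Real.sqrt (1 - n ^ 2 * Real.sin θ ^ 2)) / 2) : ℂ)]) =
        f ![Real.cos (Real.arccos (Real.sqrt (1 - n ^ 2 * Real.sin θ ^ 2)) / 2) ^ 2,
            Real.sin (Real.arccos (Real.sqrt (1 - n ^ 2 * Real.sin θ ^ 2)) / 2) ^ 2] := by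
  have hsin : 0 ≤ Real.sin θ := Real.sin_nonneg_of_nonneg_of_le_pi hθ0
    (hθ1.trans (by linarith [Real.pi_pos]))
  have hcosθ : 0 ≤ Real.cos θ := Real.cos_nonneg_of_mem_Icc
    ⟨by linarith [Real.pi_pos], hθ1⟩
  have hs0 : 0 ≤ n * Real.sin θ := mul_nonneg hn0 hsin
  have hs2 : n ^ 2 * Real.sin θ ^ 2 < 1 := by nlinarith
  set q : ℝ := Real.sqrt (1 - n ^ 2 * Real.sin θ ^ 2) with hqdef
  have hq2 : q ^ 2 = 1 - n ^ 2 * Real.sin θ ^ 2 := Real.sq_sqrt (by nlinarith)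
  have hqpos : 0 < q := Real.sqrt_pos.mpr (by nlinarith)
  have hq1 : q ≤ 1 := by nlinarith
  have hcq : n * Real.cos θ ≤ q := by
    nlinarith [Real.sin_sq_add_cos_sq θ, mul_nonneg hn0 hcosθ]
  set θ₃ : ℝ := Real.arccos q with hθ₃def
  have hcosθ₃ : Real.cos θ₃ = q := Real.cos_arccos (by linarith) hq1
  have hsinθ₃ : Real.sin θ₃ = n * Real.sin θ := by
    rw [hθ₃def, Real.sin_arccos, hq2]
    simpa [mul_pow] using Real.sqrt_sq hs0
  set ch := Real.cos (θ₃ / 2) with hch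
  set sh := Real.sin (θ₃ / 2) with hsh
  have hA : ch ^ 2 = (1 + q) / 2 := by
    rw [hch, Real.cos_sq, show 2 * (θ₃ / 2) = θ₃ by ring, hcosθ₃]; ring
  have hB : sh ^ 2 = (1 - q) / 2 := by
    have h := Real.sin_sq_add_cos_sq (θ₃ / 2)
    rw [← hsh, ← hch] at h; nlinarith
  have hC : 2 * sh * ch = n * Real.sin θ := by
    have h := Real.sin_two_mul (θ₃ / 2)
    rw [show 2 * (θ₃ / 2) = θ₃ by ring, hsinθ₃] at h
    rw [← hsh, ← hch] at h; linarith
  set p₁ : ℝ := (-1 + n ^ 2 * Real.sin θ ^ 2 - n * Real.cos θ * q) /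
      (-2 + 2 * n ^ 2 * Real.sin θ ^ 2) with hp₁def
  set p₂ : ℝ := (-1 + n ^ 2 * Real.sin θ ^ 2 + n * Real.cos θ * q) /
      (-2 + 2 * n ^ 2 * Real.sin θ ^ 2) with hp₂def
  have hden : (-2 : ℝ) + 2 * n ^ 2 * Real.sin θ ^ 2 = -(2 * q ^ 2) := by
    rw [hq2]; ring
  have hp1 : p₁ = (q + n * Real.cos θ) / (2 * q) := by
    rw [hp₁def, hden, div_eq_div_iff (ne_of_lt (by nlinarith)) (by positivity)]
    linear_combination (2 * q) * hq2
  have hp2 : p₂ = (q - n * Real.cos θ) / (2 * q) := by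
    rw [hp₂def, hden, div_eq_div_iff (ne_of_lt (by nlinarith)) (by positivity)]
    linear_combination (2 * q) * hq2
  have hp1n : 0 ≤ p₁ := by
    rw [hp1]
    exact div_nonneg (by nlinarith [mul_nonneg hn0 hcosθ]) (by linarith)
  have hp2n : 0 ≤ p₂ := by
    rw [hp2]
    exact div_nonneg (by linarith) (by linarith)
  have hsum : p₁ + p₂ = 1 := by
    rw [hp1, hp2]
    field_simp
    ring
  refine ⟨⟨hp1n, hp2n⟩, hsum, ?_, ?_⟩
  · -- matrix identity
    have hexp : Complex.exp (Complex.I * φ) =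
        (Real.cos φ : ℂ) + (Real.sin φ : ℂ) * Complex.I := by
      rw [mul_comm, Complex.exp_mul_I, ← Complex.ofReal_cos, ← Complex.ofReal_sin]
    have hA' : (ch : ℂ) ^ 2 = (1 + (q : ℂ)) / 2 := by
      exact_mod_cast congrArg (Complex.ofReal) hA
    have hB' : (sh : ℂ) ^ 2 = (1 - (q : ℂ)) / 2 := by
      exact_mod_cast congrArg (Complex.ofReal) hB
    have hC' : 2 * (sh : ℂ) * ch = (n : ℂ) * (Real.sin θ : ℂ) := by
      exact_mod_cast congrArg (Complex.ofReal) hC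
    have hE : (q : ℂ) * ((p₁ : ℂ) - p₂) = (n : ℂ) * (Real.cos θ : ℂ) := by
      have h : q * (p₁ - p₂) = n * Real.cos θ := by
        rw [hp1, hp2]; field_simp; ring
      exact_mod_cast congrArg (Complex.ofReal) h
    have hD : (p₁ : ℂ) + p₂ = 1 := by exact_mod_cast congrArg (Complex.ofReal) hsum
    have hqne : (q : ℂ) ≠ 0 := by exact_mod_cast hqpos.ne'
    have hphi : ((Real.cos φ : ℂ)) ^ 2 + ((Real.sin φ : ℂ)) ^ 2 = 1 := by
      exact_mod_cast congrArg Complex.ofReal (Real.cos_sq_add_sin_sq φ)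
    have hX : ((Real.cos φ : ℂ) + (Real.sin φ : ℂ) * Complex.I) *
        ((Real.cos φ : ℂ) + (Real.sin φ : ℂ) * (-Complex.I)) = 1 := by
      linear_combination hphi - ((Real.sin φ : ℂ)) ^ 2 * Complex.I_sq
    ext i j
    fin_cases i <;> fin_cases j <;>
      simp only [bloch, outer, pauli1, pauli2, pauli3, Matrix.vecMulVec_apply,
        Matrix.add_apply, Matrix.smul_apply, Matrix.one_apply, Matrix.cons_val',
        Matrix.of_apply, Complex.real_smul,
        Matrix.cons_val_zero, Matrix.cons_val_one, Matrix.head_cons, Matrix.head_fin_const,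
        Matrix.empty_val', Matrix.cons_val_fin_one, hexp, map_add, _root_.map_mul, _root_.map_one,
        Complex.conj_ofReal, Complex.conj_I, smul_eq_mul, Fin.isValue, if_true, if_false,
        Fin.mk_zero, Fin.mk_one, ne_eq, one_ne_zero, zero_ne_one, not_false_eq_true,
        Matrix.one_apply_eq, Matrix.one_apply_ne] <;>
      push_cast [← Complex.ofReal_cos, ← Complex.ofReal_sin]
    · linear_combination -((p₁:ℂ) * hA' + (p₂:ℂ) * hB' + hD/2 + hE/2)
    · linear_combination -((((Real.cos φ : ℂ) + (Real.sin φ : ℂ) * (-Complex.I))/2) * hC'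
        + ((sh:ℂ) * (ch:ℂ) * ((Real.cos φ : ℂ) + (Real.sin φ : ℂ) * (-Complex.I))) * hD)
    · linear_combination -((((Real.cos φ : ℂ) + (Real.sin φ : ℂ) * Complex.I)/2) * hC'
        + ((sh:ℂ) * (ch:ℂ) * ((Real.cos φ : ℂ) + (Real.sin φ : ℂ) * Complex.I)) * hD)
    · linear_combination -(((p₁:ℂ) * (sh:ℂ)^2 + (p₂:ℂ) * (ch:ℂ)^2) * hX
        + (p₁:ℂ) * hB' + (p₂:ℂ) * hA' + hD/2 - hE/2)
  · intro f hf _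
    have hc1 : cohVec ![(ch : ℂ), Complex.exp (Complex.I * φ) * (sh : ℂ)]
        = ![ch ^ 2, sh ^ 2] := by
      funext i
      fin_cases i <;>
        simp [cohVec, Complex.norm_exp, Complex.mul_re, sq_abs, sq, abs_mul_abs_self]
    have hc2 : cohVec ![(sh : ℂ), Complex.exp (Complex.I * φ) * (ch : ℂ)]
        = ![sh ^ 2, ch ^ 2] := by
      funext i
      fin_cases i <;>
        simp [cohVec, Complex.norm_exp, Complex.mul_re, sq_abs, sq, abs_mul_abs_self]
    rw [hc1, hc2]
    have hswap : f ![sh ^ 2, ch ^ 2] = f ![ch ^ 2, sh ^ 2] := by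
      have h := hf (Equiv.swap 0 1) ![ch ^ 2, sh ^ 2]
      rw [← h]
      congr 1
      funext i
      fin_cases i <;> simp
    rw [hswap]
    linear_combination f ![ch ^ 2, sh ^ 2] * hsum


/-- The decomposition `D^(m₁)` of a qubit state with Bloch parameters `(n, θ, φ)`:
with `θ₃ = arccos √(1 − n² sin²θ)`, the states `ψ₁ = (cos(θ₃/2), e^{iφ} sin(θ₃/2))`,
`ψ₂ = (sin(θ₃/2), e^{iφ} cos(θ₃/2))` with the indicated weights decompose `ρ`, and
for every symmetric concave `f` the average coherence of this decomposition equals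
`f(cos²(θ₃/2), sin²(θ₃/2))`. -/
theorem decomposition_Dm1 (n θ φ : ℝ)
    (hn0 : 0 ≤ n) (hn1 : n ≤ 1) (hθ0 : 0 ≤ θ) (hθ1 : θ ≤ Real.pi / 2)
    (hcase : n < 1 ∨ (n = 1 ∧ 0 < θ)) (hns : n * Real.sin θ < 1) :
    let ρ := bloch n θ φ
    let θ₃ := Real.arccos (Real.sqrt (1 - n ^ 2 * Real.sin θ ^ 2))
    let ψ₁ : Fin 2 → ℂ :=
      ![(Real.cos (θ₃ / 2) : ℂ),
        Complex.exp (Complex.I * φ) * (Real.sin (θ₃ / 2) : ℂ)]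
    let ψ₂ : Fin 2 → ℂ :=
      ![(Real.sin (θ₃ / 2) : ℂ),
        Complex.exp (Complex.I * φ) * (Real.cos (θ₃ / 2) : ℂ)]
    let p₁ : ℝ := (-1 + n ^ 2 * Real.sin θ ^ 2
        - n * Real.cos θ * Real.sqrt (1 - n ^ 2 * Real.sin θ ^ 2)) /
      (-2 + 2 * n ^ 2 * Real.sin θ ^ 2)
    let p₂ : ℝ := (-1 + n ^ 2 * Real.sin θ ^ 2
        + n * Real.cos θ * Real.sqrt (1 - n ^ 2 * Real.sin θ ^ 2)) /
      (-2 + 2 * n ^ 2 * Real.sin θ ^ 2)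
    (0 ≤ p₁ ∧ 0 ≤ p₂) ∧ p₁ + p₂ = 1 ∧
    ρ = (p₁ : ℂ) • outer ψ₁ + (p₂ : ℂ) • outer ψ₂ ∧
    ∀ f : (Fin 2 → ℝ) → ℝ, SymmetricFn f → ConcaveOn ℝ (stdSimplex ℝ (Fin 2)) f →
      p₁ * f (cohVec ψ₁) + p₂ * f (cohVec ψ₂) =
        f ![Real.cos (θ₃ / 2) ^ 2, Real.sin (θ₃ / 2) ^ 2] := by
  exact aux_Dm1 n θ φ hn0 hn1 hθ0 hθ1 hns
end
end

section
/- Let ρ be the qubit density matrix with Bloch parameters (n, θ, φ), 0 ≤ n ≤ 1, 0 ≤ θ ≤ π/2, with 1 + n cosθ > 0. Let θ₄ = arccos[(1 + 2n cosθ + n² cos 2θ)/(1 + n² + 2n cosθ)], and define ψ₁ = (0, 1)ᵀ with p₁ = (1 − n²)/(2(1 + n cosθ)) and ψ₂ = (cos(θ₄/2), e^{iφ} sin(θ₄/2))ᵀ with p₂ = (1 + n² + 2n cosθ)/(2(1 + n cosθ)). Then p₁, p₂ ≥ 0, p₁ + p₂ = 1, ρ = p₁ ψ₁ψ₁* + p₂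 ψ₂ψ₂*, and for every symmetric concave f on Ω₂ with f(1, 0) = 0, the average coherence of this decomposition D^(m₂) equals p₂ · f(cos²(θ₄/2), sin²(θ₄/2)). -/
open Matrix BigOperators
open scoped ComplexOrder

noncomputable section

/-!
With `u = 1 + n cos θ` and `v = n sin θ` one has `1 + n² + 2n cos θ = u² + v²`, and the argument of
the arccos defining `θ₄` is `(u² - v²)/(u² + v²)`. The half-angle formulas then give
`cos²(θ₄/2) = u²/(u² + v²)`, `sin²(θ₄/2) = v²/(u² + v²)` and `cos(θ₄/2) sin(θ₄/2) = uv/(u² + v²)`,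
after which the matrix identity is an entrywise polynomial identity. The coherence of `ψ₁` vanishes
because its coherence vector `(0, 1)` is a permutation of `(1, 0)`.
-/

namespace Real

theorem abs_sq_sub_sq_div_sq_add_sq_le_one (u v : ℝ) :
    |(u ^ 2 - v ^ 2) / (u ^ 2 + v ^ 2)| ≤ 1 := by
  rw [abs_div, abs_of_nonneg (by positivity : 0 ≤ u ^ 2 + v ^ 2)]
  exact div_le_one_of_le₀ (abs_le.mpr ⟨by nlinarith, by nlinarith⟩) (by positivity)

theorem cos_sq_half_arccos_sq_sub_sq_div {u v : ℝ} (huv : u ^ 2 + v ^ 2 ≠ 0) :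
    cos (arccos ((u ^ 2 - v ^ 2) / (u ^ 2 + v ^ 2)) / 2) ^ 2 = u ^ 2 / (u ^ 2 + v ^ 2) := by
  obtain ⟨h₁, h₂⟩ := abs_le.mp (abs_sq_sub_sq_div_sq_add_sq_le_one u v)
  rw [cos_sq, mul_div_cancel₀ _ two_ne_zero, cos_arccos h₁ h₂]
  field_simp
  ring

theorem sin_sq_half_arccos_sq_sub_sq_div {u v : ℝ} (huv : u ^ 2 + v ^ 2 ≠ 0) :
    sin (arccos ((u ^ 2 - v ^ 2) / (u ^ 2 + v ^ 2)) / 2) ^ 2 = v ^ 2 / (u ^ 2 + v ^ 2) := by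
  rw [sin_sq, cos_sq_half_arccos_sq_sub_sq_div huv]
  field_simp
  ring

theorem cos_mul_sin_half_arccos (x : ℝ) :
    cos (arccos x / 2) * sin (arccos x / 2) = √(1 - x ^ 2) / 2 := by
  rw [← sin_arccos, ← mul_div_cancel₀ (arccos x) two_ne_zero, sin_two_mul,
    mul_div_cancel_left₀ _ two_ne_zero]
  ring

theorem cos_mul_sin_half_arccos_sq_sub_sq_div {u v : ℝ} (huv : u ^ 2 + v ^ 2 ≠ 0)
    (h : 0 ≤ u * v) :
    cos (arccos ((u ^ 2 - v ^ 2) / (u ^ 2 + v ^ 2)) / 2) *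
      sin (arccos ((u ^ 2 - v ^ 2) / (u ^ 2 + v ^ 2)) / 2) = u * v / (u ^ 2 + v ^ 2) := by
  have hsq : 1 - ((u ^ 2 - v ^ 2) / (u ^ 2 + v ^ 2)) ^ 2 =
      (2 * (u * v / (u ^ 2 + v ^ 2))) ^ 2 := by
    field_simp
    ring
  rw [cos_mul_sin_half_arccos, hsq, sqrt_sq (by positivity)]
  ring

end Real

theorem outer_apply {n : ℕ} (ψ : Fin n → ℂ) (i j : Fin n) :
    outer ψ i j = ψ i * starRingEnd ℂ (ψ j) := rfl

theorem bloch_eq_smul_outer_add_smul_outer {r θ φ p₁ p₂ a b : ℝ}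
    (h₀₀ : p₂ * a ^ 2 = (1 + r * Real.cos θ) / 2)
    (h₁₁ : p₁ + p₂ * b ^ 2 = (1 - r * Real.cos θ) / 2)
    (h₀₁ : p₂ * (a * b) = r * Real.sin θ / 2) :
    bloch r θ φ = (p₁ : ℂ) • outer ![0, 1]
      + (p₂ : ℂ) • outer ![(a : ℂ), Complex.exp (Complex.I * φ) * b] := by
  have hexp : Complex.exp (Complex.I * φ) = Real.cos φ + Real.sin φ * Complex.I := by
    rw [mul_comm, Complex.exp_mul_I, ← Complex.ofReal_cos, ← Complex.ofReal_sin]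
  have hφ := congrArg Complex.ofReal (Real.cos_sq_add_sin_sq φ)
  have h₀₀' := congrArg Complex.ofReal h₀₀
  have h₁₁' := congrArg Complex.ofReal h₁₁
  have h₀₁' := congrArg Complex.ofReal h₀₁
  push_cast at hφ h₀₀' h₁₁' h₀₁'
  ext i j
  fin_cases i <;> fin_cases j <;>
    simp only [bloch, pauli1, pauli2, pauli3, one_div, smul_of, smul_cons, smul_zero, smul_empty,
      smul_neg, smul_eq_mul, Complex.real_smul, Complex.coe_smul, Complex.ofReal_mul,
      Complex.ofReal_sin, Complex.ofReal_cos, Matrix.smul_apply, Matrix.add_apply, one_apply_eq,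
      one_apply_ne, ne_eq, zero_ne_one, one_ne_zero, not_false_eq_true, of_apply, cons_val',
      cons_val_zero, cons_val_one, cons_val_fin_one, Fin.zero_eta, Fin.mk_one, outer_apply, hexp,
      map_zero, map_one, map_mul, map_add, Complex.conj_ofReal, Complex.conj_I,
      ← Complex.cos_conj, ← Complex.sin_conj, mul_one, mul_zero, mul_neg, add_zero, zero_add]
  · linear_combination -h₀₀'
  · linear_combination (Complex.sin φ * Complex.I - Complex.cos φ) * h₀₁'
  · linear_combination -(Complex.cos φ + Complex.sin φ * Complex.I) * h₀₁'
  · linear_combination -h₁₁' - p₂ * b ^ 2 * hφ + p₂ * b ^ 2 * Complex.sin φ ^ 2 * Complex.I_sq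

theorem cohVec_zero_one : cohVec (![0, 1] : Fin 2 → ℂ) = ![1, 0] ∘ Equiv.swap 0 1 := by
  ext i
  fin_cases i <;> simp [cohVec]

theorem cohVec_ofReal_exp_mul_ofReal (a b φ : ℝ) :
    cohVec ![(a : ℂ), Complex.exp (Complex.I * φ) * b] = ![a ^ 2, b ^ 2] := by
  ext i
  fin_cases i <;> simp [cohVec, Complex.norm_exp]

theorem one_add_sq_add_two_mul_cos_eq (n θ : ℝ) :
    1 + n ^ 2 + 2 * n * Real.cos θ = (1 + n * Real.cos θ) ^ 2 + (n * Real.sin θ) ^ 2 := by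
  linear_combination -n ^ 2 * Real.sin_sq_add_cos_sq θ

theorem one_add_two_mul_cos_add_sq_mul_cos_two_mul_eq (n θ : ℝ) :
    1 + 2 * n * Real.cos θ + n ^ 2 * Real.cos (2 * θ) =
      (1 + n * Real.cos θ) ^ 2 - (n * Real.sin θ) ^ 2 := by
  rw [Real.cos_two_mul]
  linear_combination n ^ 2 * Real.sin_sq_add_cos_sq θ

/-- The decomposition `D^(m₂)` of a qubit state with Bloch parameters `(n, θ, φ)`:
with `θ₄ = arccos[(1 + 2n cosθ + n² cos 2θ)/(1 + n² + 2n cosθ)]`, the states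
`ψ₁ = (0, 1)` and `ψ₂ = (cos(θ₄/2), e^{iφ} sin(θ₄/2))` with the indicated weights
decompose `ρ`, and for every symmetric concave `f` with `f(1,0) = 0` the average
coherence of this decomposition equals `p₂ · f(cos²(θ₄/2), sin²(θ₄/2))`. -/
theorem decomposition_Dm2 (n θ φ : ℝ)
    (hn0 : 0 ≤ n) (hn1 : n ≤ 1) (hθ0 : 0 ≤ θ) (hθ1 : θ ≤ Real.pi / 2)
    (hpos : 0 < 1 + n * Real.cos θ) :
    let ρ := bloch n θ φ
    let θ₄ := Real.arccos ((1 + 2 * n * Real.cos θ + n ^ 2 * Real.cos (2 * θ)) /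
      (1 + n ^ 2 + 2 * n * Real.cos θ))
    let ψ₁ : Fin 2 → ℂ := ![0, 1]
    let ψ₂ : Fin 2 → ℂ :=
      ![(Real.cos (θ₄ / 2) : ℂ),
        Complex.exp (Complex.I * φ) * (Real.sin (θ₄ / 2) : ℂ)]
    let p₁ : ℝ := (1 - n ^ 2) / (2 * (1 + n * Real.cos θ))
    let p₂ : ℝ := (1 + n ^ 2 + 2 * n * Real.cos θ) / (2 * (1 + n * Real.cos θ))
    (0 ≤ p₁ ∧ 0 ≤ p₂) ∧ p₁ + p₂ = 1 ∧
    ρ = (p₁ : ℂ) • outer ψ₁ + (p₂ : ℂ) • outer ψ₂ ∧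
    ∀ f : (Fin 2 → ℝ) → ℝ, SymmetricFn f → ConcaveOn ℝ (stdSimplex ℝ (Fin 2)) f →
      f ![1, 0] = 0 →
      p₁ * f (cohVec ψ₁) + p₂ * f (cohVec ψ₂) =
        p₂ * f ![Real.cos (θ₄ / 2) ^ 2, Real.sin (θ₄ / 2) ^ 2] := by
  intro ρ θ₄ ψ₁ ψ₂ p₁ p₂
  simp only [θ₄, ψ₁, ψ₂, p₁, p₂, one_add_sq_add_two_mul_cos_eq,
    one_add_two_mul_cos_add_sq_mul_cos_two_mul_eq]
  have hv : 0 ≤ n * Real.sin θ :=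
    mul_nonneg hn0 (Real.sin_nonneg_of_nonneg_of_le_pi hθ0 (by linarith [Real.pi_pos]))
  have hD : (1 + n * Real.cos θ) ^ 2 + (n * Real.sin θ) ^ 2 ≠ 0 := by positivity
  have hc2 := Real.cos_sq_half_arccos_sq_sub_sq_div hD
  have hs2 := Real.sin_sq_half_arccos_sq_sub_sq_div hD
  have hcs := Real.cos_mul_sin_half_arccos_sq_sub_sq_div hD (mul_nonneg hpos.le hv)
  refine ⟨⟨div_nonneg (by nlinarith) (by positivity), by positivity⟩, ?_, ?_, ?_⟩
  · field_simp
    linear_combination n ^ 2 * Real.sin_sq_add_cos_sq θ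
  · apply bloch_eq_smul_outer_add_smul_outer
    · rw [hc2]; field_simp
    · rw [hs2]; field_simp; linear_combination n ^ 2 * Real.sin_sq_add_cos_sq θ
    · rw [hcs]; field_simp
  · intro f hf _ hf₁₀
    rw [cohVec_zero_one, hf, hf₁₀, cohVec_ofReal_exp_mul_ofReal, mul_zero, zero_add]
end
end

section
/- Let 0 ≤ n ≤ 1 and 0 ≤ θ ≤ π/2 with n sinθ < 1, and set θ_o = arccos(n cosθ) and θ₃ = arccos √(1 − n² sin²θ). Then for every function f : ℝ² → ℝ that is symmetric and concave on the probability simplex Ω₂, the average coherences of the qubit decompositions D^(m₁), D^(s), D^(M) satisfy the measure-independent order relation f(cos²(θ₃/2), sin²(θ₃/2)) ≤ f(cos²(θ/2), sin²(θ/2)) ≤ f(cos²(θ_o/2), sin²(θ_o/2)), i.e. C̄(D^(m₁)) ≤ C̄(D^(s)) ≤ C̄(D^(M)). (Order relation (8).) -/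
open Set Real

theorem ConcaveOn.antitoneOn_of_symm {g : ℝ → ℝ} (hg : ConcaveOn ℝ (Icc 0 1) g)
    (hsymm : ∀ x ∈ Icc (0 : ℝ) 1, g (1 - x) = g x) : AntitoneOn g (Icc (1 / 2) 1) := by
  rintro a ⟨ha, -⟩ b ⟨hb, hb1⟩ hab
  have hseg : a ∈ segment ℝ (1 - b) b := by
    rw [segment_eq_Icc (by linarith)]
    exact ⟨by linarith, hab⟩
  have hb_mem : b ∈ Icc (0 : ℝ) 1 := ⟨by linarith, hb1⟩
  have := hg.ge_on_segment ⟨by linarith, by linarith⟩ hb_mem hseg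
  rwa [hsymm b hb_mem, min_self] at this

theorem ConcaveOn.comp_binary {f : (Fin 2 → ℝ) → ℝ} (hf : ConcaveOn ℝ (stdSimplex ℝ (Fin 2)) f) :
    ConcaveOn ℝ (Icc 0 1) fun a ↦ f ![a, 1 - a] := by
  have hline : ∀ a : ℝ, AffineMap.lineMap ![0, 1] ![1, 0] a = ![a, 1 - a] := by
    intro a
    ext i
    fin_cases i <;> simp [AffineMap.lineMap_apply, neg_add_eq_sub]
  have hpre : AffineMap.lineMap ![0, 1] ![1, 0] ⁻¹' stdSimplex ℝ (Fin 2) = Icc (0 : ℝ) 1 := by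
    ext a
    simp only [mem_preimage, hline, stdSimplex, mem_ofPred_eq, Fin.forall_fin_two,
      Fin.sum_univ_two, Matrix.cons_val_zero, Matrix.cons_val_one, mem_Icc]
    constructor
    · rintro ⟨⟨h0, h1⟩, -⟩
      exact ⟨h0, by linarith⟩
    · rintro ⟨h0, h1⟩
      exact ⟨⟨h0, by linarith⟩, by ring⟩
  have := hf.comp_affineMap (AffineMap.lineMap ![0, 1] ![1, 0])
  rw [hpre] at this
  simpa only [Function.comp_def, hline] using this

theorem SymmetricFn.apply_swap {f : (Fin 2 → ℝ) → ℝ} (hf : SymmetricFn f) (a b : ℝ) :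
    f ![b, a] = f ![a, b] := by
  have hswap : ![a, b] ∘ Equiv.swap 0 1 = ![b, a] := by
    ext i
    fin_cases i <;> simp
  rw [← hswap, hf]

theorem SymmetricFn.antitoneOn_of_concaveOn {f : (Fin 2 → ℝ) → ℝ} (hsym : SymmetricFn f)
    (hconc : ConcaveOn ℝ (stdSimplex ℝ (Fin 2)) f) :
    AntitoneOn (fun a ↦ f ![a, 1 - a]) (Icc (1 / 2) 1) :=
  hconc.comp_binary.antitoneOn_of_symm fun x _ ↦ by
    simpa only [sub_sub_cancel] using hsym.apply_swap x (1 - x)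

theorem SymmetricFn.monotoneOn_cos_sq_half {f : (Fin 2 → ℝ) → ℝ} (hsym : SymmetricFn f)
    (hconc : ConcaveOn ℝ (stdSimplex ℝ (Fin 2)) f) :
    MonotoneOn (fun φ ↦ f ![cos (φ / 2) ^ 2, sin (φ / 2) ^ 2]) (Icc 0 (π / 2)) := by
  have hcos_sq : ∀ φ, cos (φ / 2) ^ 2 = 1 / 2 + cos φ / 2 := fun φ ↦ by
    rw [cos_sq]; ring_nf
  have hmem : ∀ φ ∈ Icc 0 (π / 2), cos (φ / 2) ^ 2 ∈ Icc (1 / 2 : ℝ) 1 := fun φ hφ ↦ by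
    rw [hcos_sq]
    exact ⟨by linarith [cos_nonneg_of_mem_Icc ⟨by linarith [hφ.1, pi_pos], hφ.2⟩],
      by linarith [cos_le_one φ]⟩
  intro φ hφ ψ hψ hφψ
  simp only [sin_sq]
  refine hsym.antitoneOn_of_concaveOn hconc (hmem ψ hψ) (hmem φ hφ) ?_
  rw [hcos_sq, hcos_sq]
  linarith [cos_le_cos_of_nonneg_of_le_pi hφ.1 (by linarith [hψ.2, pi_pos]) hφψ]

theorem arccos_mem_Icc_zero_pi_div_two {x : ℝ} (hx : 0 ≤ x) : arccos x ∈ Icc 0 (π / 2) :=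
  ⟨arccos_nonneg x, arccos_le_pi_div_two.2 hx⟩

theorem order_relation_Dm1_Ds_DM_general (n θ : ℝ)
    (hn0 : 0 ≤ n) (hn1 : n ≤ 1) (hθ0 : 0 ≤ θ) (hθ1 : θ ≤ Real.pi / 2)
    (f : (Fin 2 → ℝ) → ℝ) (hsym : SymmetricFn f)
    (hconc : ConcaveOn ℝ (stdSimplex ℝ (Fin 2)) f) :
    let θo := Real.arccos (n * Real.cos θ)
    let θ₃ := Real.arccos (Real.sqrt (1 - n ^ 2 * Real.sin θ ^ 2))
    f ![Real.cos (θ₃ / 2) ^ 2, Real.sin (θ₃ / 2) ^ 2] ≤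
        f ![Real.cos (θ / 2) ^ 2, Real.sin (θ / 2) ^ 2] ∧
      f ![Real.cos (θ / 2) ^ 2, Real.sin (θ / 2) ^ 2] ≤
        f ![Real.cos (θo / 2) ^ 2, Real.sin (θo / 2) ^ 2] := by
  intro θo θ₃
  have hθ : θ ∈ Icc 0 (π / 2) := ⟨hθ0, hθ1⟩
  have hcos : 0 ≤ cos θ := cos_nonneg_of_mem_Icc ⟨by linarith [pi_pos], hθ1⟩
  have hθ_eq : arccos (cos θ) = θ := arccos_cos hθ0 (by linarith [pi_pos])
  have hcos_le_sqrt : cos θ ≤ √(1 - n ^ 2 * sin θ ^ 2) := by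
    refine le_sqrt_of_sq_le ?_
    have hn_sq : n ^ 2 ≤ 1 := by nlinarith
    nlinarith [sin_sq_add_cos_sq θ, sq_nonneg (sin θ)]
  have hθ₃_le : θ₃ ≤ θ := hθ_eq ▸ arccos_le_arccos hcos_le_sqrt
  have hθ_le : θ ≤ θo := hθ_eq ▸ arccos_le_arccos (mul_le_of_le_one_left hcos hn1)
  have hmono := hsym.monotoneOn_cos_sq_half hconc
  exact ⟨hmono (arccos_mem_Icc_zero_pi_div_two (sqrt_nonneg _)) hθ hθ₃_le,
    hmono hθ (arccos_mem_Icc_zero_pi_div_two (mul_nonneg hn0 hcos)) hθ_le⟩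

/-- Order relation (8): for every symmetric concave `f` on the probability simplex,
the average coherences of the qubit decompositions `D^(m₁)`, `D^(s)`, `D^(M)`
satisfy `C̄(D^(m₁)) ≤ C̄(D^(s)) ≤ C̄(D^(M))`, where `θ_o = arccos(n cos θ)` and
`θ₃ = arccos √(1 − n² sin²θ)`. -/
theorem order_relation_Dm1_Ds_DM (n θ : ℝ)
    (hn0 : 0 ≤ n) (hn1 : n ≤ 1) (hθ0 : 0 ≤ θ) (hθ1 : θ ≤ Real.pi / 2)
    (hns : n * Real.sin θ < 1)
    (f : (Fin 2 → ℝ) → ℝ) (hsym : SymmetricFn f)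
    (hconc : ConcaveOn ℝ (stdSimplex ℝ (Fin 2)) f) :
    let θo := Real.arccos (n * Real.cos θ)
    let θ₃ := Real.arccos (Real.sqrt (1 - n ^ 2 * Real.sin θ ^ 2))
    f ![Real.cos (θ₃ / 2) ^ 2, Real.sin (θ₃ / 2) ^ 2] ≤
        f ![Real.cos (θ / 2) ^ 2, Real.sin (θ / 2) ^ 2] ∧
      f ![Real.cos (θ / 2) ^ 2, Real.sin (θ / 2) ^ 2] ≤
        f ![Real.cos (θo / 2) ^ 2, Real.sin (θo / 2) ^ 2] :=
  order_relation_Dm1_Ds_DM_general n θ hn0 hn1 hθ0 hθ1 f hsym hconc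
end

section
/- Let 0 < n < 1 and 0 ≤ θ ≤ π/2, set θ_o = arccos(n cosθ), and let f : ℝ² → ℝ be symmetric and strictly concave on the probability simplex Ω₂. Then the average coherence of the spectral decomposition equals the maximal average coherence, f(cos²(θ/2), sin²(θ/2)) = f(cos²(θ_o/2), sin²(θ_o/2)), if and only if θ = π/2. (The spectral decomposition attains the maximal average coherence exactly for states on the central disc of the Bloch sphere.) -/
noncomputable section

/-- For `0 < n < 1` and a symmetric strictly concave `f` on the probability
simplex, the average coherence of the spectral decomposition equals the maximal
average coherence, `f(cos²(θ/2), sin²(θ/2)) = f(cos²(θ_o/2), sin²(θ_o/2))` with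
`θ_o = arccos(n cos θ)`, if and only if `θ = π/2`. -/
theorem spectral_attains_max_iff_central_disc (n θ : ℝ)
    (hn0 : 0 < n) (hn1 : n < 1) (hθ0 : 0 ≤ θ) (hθ1 : θ ≤ Real.pi / 2)
    (f : (Fin 2 → ℝ) → ℝ) (hsym : SymmetricFn f)
    (hconc : StrictConcaveOn ℝ (stdSimplex ℝ (Fin 2)) f) :
    let θo := Real.arccos (n * Real.cos θ)
    (f ![Real.cos (θ / 2) ^ 2, Real.sin (θ / 2) ^ 2] =
        f ![Real.cos (θo / 2) ^ 2, Real.sin (θo / 2) ^ 2]) ↔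
      θ = Real.pi / 2 := by
  intro θo
  set c := Real.cos θ with hc
  have hc1 : c ≤ 1 := Real.cos_le_one θ
  have hc0 : 0 ≤ c := Real.cos_nonneg_of_mem_Icc ⟨by linarith [Real.pi_pos], hθ1⟩
  have hnc1 : n * c ≤ 1 := by nlinarith
  have hnc0 : -1 ≤ n * c := by nlinarith
  have hcosθo : Real.cos θo = n * c := Real.cos_arccos hnc0 hnc1
  -- rewrite the squared halves
  have key : ∀ x : ℝ, Real.cos (x / 2) ^ 2 = 1 / 2 + Real.cos x / 2 := by
    intro x
    have := Real.cos_sq (x / 2)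
    rwa [show 2 * (x / 2) = x by ring] at this
  have key2 : ∀ x : ℝ, Real.sin (x / 2) ^ 2 = 1 / 2 - Real.cos x / 2 := by
    intro x
    have h1 := Real.sin_sq_add_cos_sq (x / 2)
    have h2 := key x
    linarith
  rw [key, key, key2, key2, hcosθo]
  constructor
  · intro h
    by_contra hne
    have hθlt : θ < Real.pi / 2 := lt_of_le_of_ne hθ1 hne
    have hcpos : 0 < c := Real.cos_pos_of_mem_Ioo ⟨by linarith [Real.pi_pos], hθlt⟩
    set p : Fin 2 → ℝ := ![1 / 2 + c / 2, 1 / 2 - c / 2] with hp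
    set p' : Fin 2 → ℝ := ![1 / 2 - c / 2, 1 / 2 + c / 2] with hp'
    have hpmem : p ∈ stdSimplex ℝ (Fin 2) := by
      constructor
      · intro i
        fin_cases i <;> simp [hp] <;> linarith
      · simp [hp, Fin.sum_univ_two]; ring
    have hp'mem : p' ∈ stdSimplex ℝ (Fin 2) := by
      constructor
      · intro i
        fin_cases i <;> simp [hp'] <;> linarith
      · simp [hp', Fin.sum_univ_two]; ring
    have hppne : p ≠ p' := by
      intro hEq
      have := congrFun hEq 0
      simp [hp, hp'] at this
      linarith
    have hfp' : f p' = f p := by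
      have := hsym (Equiv.swap 0 1) p
      have hcomp : p ∘ (Equiv.swap 0 1) = p' := by
        funext i
        fin_cases i <;> simp [hp, hp', Equiv.swap_apply_left, Equiv.swap_apply_right]
      rwa [hcomp] at this
    have ha : (0 : ℝ) < (1 + n) / 2 := by linarith
    have hb : (0 : ℝ) < (1 - n) / 2 := by linarith
    have hab : (1 + n) / 2 + (1 - n) / 2 = 1 := by ring
    have hlt := hconc.2 hpmem hp'mem hppne ha hb hab
    have hcomb : ((1 + n) / 2) • p + ((1 - n) / 2) • p' =
        ![1 / 2 + n * c / 2, 1 / 2 - n * c / 2] := by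
      funext i
      fin_cases i <;> simp [hp, hp'] <;> ring
    rw [hcomb, hfp'] at hlt
    have : f p < f ![1 / 2 + n * c / 2, 1 / 2 - n * c / 2] := by
      have : ((1 + n) / 2) • f p + ((1 - n) / 2) • f p = f p := by
        simp [smul_eq_mul]; ring
      linarith [hlt, this.symm ▸ hlt]
    exact absurd h (ne_of_lt this)
  · intro h
    subst h
    rw [hc, Real.cos_pi_div_two]
    norm_num
end
end

section
/- There exist a function f : ℝ² → ℝ, symmetric and concave on the probability simplex Ω₂ with f(1,0) = 0, and Bloch parameters 0 ≤ n ≤ 1, 0 ≤ θ ≤ π/2, such that the average coherence of the decomposition D^(m₁) strictly exceeds that of D^(m₂): f(cos²(θ₃/2), sin²(θ₃/2)) > p₂ · f(cos²(θ₄/2), sin²(θ₄/2)). In particular, one may take f(x₀, x₁) = 1 − (2(max(x₀,x₁) − 1/2))^{2k} for a sufficiently large integer k. (Hence no single pure state decomposition attains the minimal average coherence simultaneously for all coherence measures.) -/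
/-! With `f = 1 - (x₀ - x₁)^(2k)` (on the simplex this is the paper's
`1 - (2(max(x₀,x₁) - 1/2))^(2k)`), both average coherences become explicit:
`f(cos²(t/2), sin²(t/2)) = 1 - cos^(2k) t`. For `n = 1/2`, `θ = π/2` one has
`cos θ₃ = √(3/4)`, `cos θ₄ = 3/5` and `p₂ = 5/8`, and already for `k = 4`
`5/8 · (1 - (3/5)^8) < 1 - (3/4)^4`. -/

noncomputable section

open Real

def evenPowCoherence (k : ℕ) (x : Fin 2 → ℝ) : ℝ :=
  1 - (x 0 - x 1) ^ (2 * k)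

namespace evenPowCoherence

variable (k : ℕ)

theorem symmetricFn : SymmetricFn (evenPowCoherence k) := by
  intro σ x
  obtain rfl | rfl : σ = 1 ∨ σ = Equiv.swap 0 1 := by revert σ; decide
  · rfl
  · simp only [evenPowCoherence, Function.comp_apply, Equiv.swap_apply_left,
      Equiv.swap_apply_right]
    rw [← neg_sub (x 0), (even_two_mul k).neg_pow]

theorem concaveOn : ConcaveOn ℝ Set.univ (evenPowCoherence k) := by
  have hpow : ConvexOn ℝ Set.univ fun t : ℝ => t ^ (2 * k) :=
    (even_two_mul k).convexOn_pow
  have hdiff := hpow.comp_linearMap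
    (LinearMap.proj (R := ℝ) (φ := fun _ : Fin 2 => ℝ) 0 - LinearMap.proj 1)
  refine (hdiff.neg.add_const 1).congr fun x _ => ?_
  simp [evenPowCoherence, sub_eq_neg_add]

theorem one_zero : evenPowCoherence k ![1, 0] = 0 := by
  simp [evenPowCoherence]

theorem cos_sin_half_sq (t : ℝ) :
    evenPowCoherence k ![cos (t / 2) ^ 2, sin (t / 2) ^ 2] = 1 - cos t ^ (2 * k) := by
  have hcos : cos (t / 2) ^ 2 - sin (t / 2) ^ 2 = cos t := by
    rw [← cos_two_mul', mul_div_cancel₀ t two_ne_zero]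
  simp [evenPowCoherence, hcos]

theorem cos_sin_half_sq_arccos {x : ℝ} (hx₁ : -1 ≤ x) (hx₂ : x ≤ 1) :
    evenPowCoherence k ![cos (arccos x / 2) ^ 2, sin (arccos x / 2) ^ 2] =
      1 - x ^ (2 * k) := by
  rw [cos_sin_half_sq, cos_arccos hx₁ hx₂]

end evenPowCoherence

/-- There exist a symmetric concave coherence function `f` on the probability
simplex with `f(1,0) = 0` and Bloch parameters `(n, θ)` for which the average
coherence of `D^(m₁)` strictly exceeds that of `D^(m₂)`:
`f(cos²(θ₃/2), sin²(θ₃/2)) > p₂ · f(cos²(θ₄/2), sin²(θ₄/2))`. Hence no single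
pure state decomposition attains the minimal average coherence simultaneously
for all coherence measures. -/
theorem exists_f_Dm1_gt_Dm2 :
    ∃ (f : (Fin 2 → ℝ) → ℝ) (n θ : ℝ),
      SymmetricFn f ∧ ConcaveOn ℝ (stdSimplex ℝ (Fin 2)) f ∧ f ![1, 0] = 0 ∧
      0 ≤ n ∧ n ≤ 1 ∧ 0 ≤ θ ∧ θ ≤ Real.pi / 2 ∧
      (let θ₃ := Real.arccos (Real.sqrt (1 - n ^ 2 * Real.sin θ ^ 2))
       let θ₄ := Real.arccos ((1 + 2 * n * Real.cos θ + n ^ 2 * Real.cos (2 * θ)) /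
         (1 + n ^ 2 + 2 * n * Real.cos θ))
       let p₂ : ℝ := (1 + n ^ 2 + 2 * n * Real.cos θ) / (2 * (1 + n * Real.cos θ))
       p₂ * f ![Real.cos (θ₄ / 2) ^ 2, Real.sin (θ₄ / 2) ^ 2] <
         f ![Real.cos (θ₃ / 2) ^ 2, Real.sin (θ₃ / 2) ^ 2]) := by
  refine ⟨evenPowCoherence 4, 1 / 2, π / 2, evenPowCoherence.symmetricFn 4,
    (evenPowCoherence.concaveOn 4).subset (Set.subset_univ _) (convex_stdSimplex ℝ _),
    evenPowCoherence.one_zero 4, by norm_num, by norm_num, by positivity, le_rfl, ?_⟩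
  have hθ₃ : 1 - (1 / 2 : ℝ) ^ 2 * sin (π / 2) ^ 2 = 3 / 4 := by
    rw [sin_pi_div_two]; norm_num
  have hθ₄ : (1 + 2 * (1 / 2 : ℝ) * cos (π / 2) + (1 / 2) ^ 2 * cos (2 * (π / 2))) /
      (1 + (1 / 2) ^ 2 + 2 * (1 / 2) * cos (π / 2)) = 3 / 5 := by
    rw [mul_div_cancel₀ π two_ne_zero, cos_pi, cos_pi_div_two]; norm_num
  intro θ₃ θ₄ p₂
  simp only [θ₃, θ₄, p₂]
  rw [hθ₃, hθ₄, cos_pi_div_two,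
    evenPowCoherence.cos_sin_half_sq_arccos 4
      (by linarith [sqrt_nonneg (3 / 4 : ℝ)]) (sqrt_le_one.mpr (by norm_num)),
    evenPowCoherence.cos_sin_half_sq_arccos 4 (by norm_num) (by norm_num),
    pow_mul √(3 / 4 : ℝ), sq_sqrt (by norm_num)]
  norm_num
end
end

section
/- For 0 ≤ x ≤ 1/2, let ρ(x) be the 2×2 density matrix with entries ρ₀₀ = ρ₁₁ = 1/2 and ρ₀₁ = ρ₁₀ = x. Then the maximum of the average l₁ norm of coherence over all pure state decompositions of ρ(x) equals 1 (attained, e.g., by a decomposition into states with coherence vector (1/2, 1/2)), and for every pure state decomposition {(p_k, ψ_k)} of ρ(x) the average l₁ coherence satisfies Σ_k p_k · 2|ψ_k(0)||ψ_k(1)| ≥ 2x, with the lower bound 2x attained by some decomposition. -/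
open Matrix BigOperators
open scoped ComplexOrder

noncomputable section

/-!
Every unit vector `ψ ∈ ℂ²` has `2‖ψ₀‖‖ψ₁‖ ≤ ‖ψ₀‖² + ‖ψ₁‖² = 1`, so any average `l₁` coherence is at
most `1`; and the off-diagonal entry `ρ₀₁ = ∑ pₖ ψₖ(0) conj (ψₖ(1))` gives, by the triangle
inequality, `2‖ρ₀₁‖ ≤ ∑ pₖ 2‖ψₖ(0)‖‖ψₖ(1)‖`. Both bounds are attained by two real states:
`(1, ±1)/√2` with weights `1/2 ± x`, and `(a, b)`, `(b, a)` with weights `1/2`, where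
`a² + b² = 1` and `ab = x`.
-/

def l1Coherence (ψ : Fin 2 → ℂ) : ℝ := 2 * ‖ψ 0‖ * ‖ψ 1‖

def avgL1CoherenceSet (ρ : Matrix (Fin 2) (Fin 2) ℂ) : Set ℝ :=
  {c | ∃ (m : ℕ) (p : Fin m → ℝ) (ψ : Fin m → Fin 2 → ℂ),
    IsDecomposition ρ p ψ ∧ c = ∑ k, p k * l1Coherence (ψ k)}

theorem l1Coherence_le_one {ψ : Fin 2 → ℂ} (hψ : ∑ i, ‖ψ i‖ ^ 2 = 1) : l1Coherence ψ ≤ 1 := by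
  rw [Fin.sum_univ_two] at hψ
  exact hψ ▸ two_mul_le_add_sq _ _

theorem IsDecomposition.norm_apply_le {n m : ℕ} {ρ : Matrix (Fin n) (Fin n) ℂ} {p : Fin m → ℝ}
    {ψ : Fin m → Fin n → ℂ} (h : IsDecomposition ρ p ψ) (i j : Fin n) :
    ‖ρ i j‖ ≤ ∑ k, p k * (‖ψ k i‖ * ‖ψ k j‖) := by
  obtain ⟨hp, -, -, hρ⟩ := h
  calc ‖ρ i j‖ = ‖∑ k, (p k : ℂ) * (ψ k i * starRingEnd ℂ (ψ k j))‖ := by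
        simp [hρ, outer, Matrix.sum_apply, Matrix.vecMulVec_apply]
    _ ≤ ∑ k, ‖(p k : ℂ) * (ψ k i * starRingEnd ℂ (ψ k j))‖ := norm_sum_le _ _
    _ = ∑ k, p k * (‖ψ k i‖ * ‖ψ k j‖) := by
        simp [Complex.norm_real, abs_of_nonneg (hp _)]

namespace avgL1CoherenceSet

variable {ρ : Matrix (Fin 2) (Fin 2) ℂ}

theorem one_mem_upperBounds : 1 ∈ upperBounds (avgL1CoherenceSet ρ) := by
  rintro _ ⟨m, p, ψ, ⟨hp, hsum, hψ, -⟩, rfl⟩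
  calc ∑ k, p k * l1Coherence (ψ k) ≤ ∑ k, p k :=
        Finset.sum_le_sum fun k _ => mul_le_of_le_one_right (hp k) (l1Coherence_le_one (hψ k))
    _ = 1 := hsum

theorem two_mul_norm_apply_zero_one_mem_lowerBounds :
    2 * ‖ρ 0 1‖ ∈ lowerBounds (avgL1CoherenceSet ρ) := by
  rintro _ ⟨m, p, ψ, h, rfl⟩
  calc 2 * ‖ρ 0 1‖ ≤ 2 * ∑ k, p k * (‖ψ k 0‖ * ‖ψ k 1‖) := by
        gcongr; exact h.norm_apply_le 0 1
    _ = ∑ k, p k * l1Coherence (ψ k) := by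
        simp only [Finset.mul_sum, l1Coherence]; ring_nf

theorem mem_of_real_pair {p q a b c d r s t v : ℝ} (hp : 0 ≤ p) (hq : 0 ≤ q)
    (hpq : p + q = 1) (hab : a ^ 2 + b ^ 2 = 1) (hcd : c ^ 2 + d ^ 2 = 1)
    (hr : p * a ^ 2 + q * c ^ 2 = r) (hs : p * b ^ 2 + q * d ^ 2 = s)
    (ht : p * (a * b) + q * (c * d) = t) (hv : p * (2 * |a| * |b|) + q * (2 * |c| * |d|) = v) :
    v ∈ avgL1CoherenceSet !![(r : ℂ), (t : ℂ); (t : ℂ), (s : ℂ)] := by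
  refine ⟨2, ![p, q], ![![(a : ℂ), b], ![(c : ℂ), d]],
    ⟨Fin.forall_fin_two.2 ⟨hp, hq⟩, by simpa using hpq, Fin.forall_fin_two.2 ⟨?_, ?_⟩, ?_⟩, ?_⟩
  · simpa [Complex.norm_real] using hab
  · simpa [Complex.norm_real] using hcd
  · subst hr hs ht
    ext i j
    fin_cases i <;> fin_cases j <;>
      simp [outer, Matrix.vecMulVec_apply, Fin.sum_univ_two, -Matrix.cons_vecMulVec,
        -Matrix.empty_vecMulVec] <;> ring
  · simp [l1Coherence, Fin.sum_univ_two, Complex.norm_real, ← hv]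

end avgL1CoherenceSet

/-- Take `(a, b) = (cos θ, sin θ)` with `sin 2θ = 2y`. -/
theorem exists_sq_add_sq_eq_one_mul_eq {y : ℝ} (h₁ : -(1 / 2) ≤ y) (h₂ : y ≤ 1 / 2) :
    ∃ a b : ℝ, a ^ 2 + b ^ 2 = 1 ∧ a * b = y := by
  refine ⟨Real.cos (Real.arcsin (2 * y) / 2), Real.sin (Real.arcsin (2 * y) / 2),
    Real.cos_sq_add_sin_sq _, ?_⟩
  have h := Real.sin_two_mul (Real.arcsin (2 * y) / 2)
  rw [mul_div_cancel₀ _ two_ne_zero, Real.sin_arcsin (by linarith) (by linarith)] at h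
  linarith

theorem one_mem_avgL1CoherenceSet {x : ℝ} (hx₁ : -(1 / 2) ≤ x) (hx₂ : x ≤ 1 / 2) :
    1 ∈ avgL1CoherenceSet !![1/2, (x : ℂ); (x : ℂ), 1/2] := by
  set u := √(1 / 2)
  have hu : u ^ 2 = 1 / 2 := Real.sq_sqrt (by norm_num)
  have hu' : |u| * |u| = 1 / 2 := by rw [abs_mul_abs_self, ← sq, hu]
  have h := avgL1CoherenceSet.mem_of_real_pair (p := 1 / 2 + x) (q := 1 / 2 - x)
    (a := u) (b := u) (c := u) (d := -u) (r := 1 / 2) (s := 1 / 2) (t := x) (v := 1)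
    (by linarith) (by linarith) (by ring)
    (by linarith) (by linear_combination 2 * hu) (by linear_combination hu)
    (by linear_combination hu) (by linear_combination 2 * x * hu)
    (by rw [abs_neg]; linear_combination 2 * hu')
  push_cast at h
  exact h

theorem two_mul_mem_avgL1CoherenceSet {x : ℝ} (hx₀ : 0 ≤ x) (hx₁ : x ≤ 1 / 2) :
    2 * x ∈ avgL1CoherenceSet !![1/2, (x : ℂ); (x : ℂ), 1/2] := by
  obtain ⟨a, b, hab, hx⟩ := exists_sq_add_sq_eq_one_mul_eq (by linarith) hx₁
  have h := avgL1CoherenceSet.mem_of_real_pair (p := 1 / 2) (q := 1 / 2)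
    (a := a) (b := b) (c := b) (d := a) (r := 1 / 2) (s := 1 / 2) (t := x) (v := 2 * x)
    (by norm_num) (by norm_num) (by norm_num)
    hab (by linear_combination hab) (by linear_combination hab / 2)
    (by linear_combination hab / 2) (by linear_combination hx) ?_
  · push_cast at h
    exact h
  · rw [← abs_of_nonneg hx₀, ← hx, abs_mul]
    ring

/-- For `ρ(x) = [[1/2, x], [x, 1/2]]` with `0 ≤ x ≤ 1/2`, the maximum of the
average `l₁` norm of coherence over all pure state decompositions equals `1`,
and the minimum equals `2x`. -/
theorem avg_l1_coherence_max_and_min (x : ℝ) (hx0 : 0 ≤ x) (hx1 : x ≤ 1 / 2) :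
    let ρ : Matrix (Fin 2) (Fin 2) ℂ := !![1/2, (x : ℂ); (x : ℂ), 1/2]
    IsGreatest {c : ℝ | ∃ (m : ℕ) (p : Fin m → ℝ) (ψ : Fin m → Fin 2 → ℂ),
        IsDecomposition ρ p ψ ∧
        c = ∑ k, p k * (2 * ‖ψ k 0‖ * ‖ψ k 1‖)} 1 ∧
    IsLeast {c : ℝ | ∃ (m : ℕ) (p : Fin m → ℝ) (ψ : Fin m → Fin 2 → ℂ),
        IsDecomposition ρ p ψ ∧
        c = ∑ k, p k * (2 * ‖ψ k 0‖ * ‖ψ k 1‖)} (2 * x) := by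
  intro ρ
  have hρ01 : 2 * ‖ρ 0 1‖ = 2 * x := by simp [ρ, abs_of_nonneg hx0]
  refine ⟨⟨one_mem_avgL1CoherenceSet (by linarith) hx1, avgL1CoherenceSet.one_mem_upperBounds⟩,
    ⟨two_mul_mem_avgL1CoherenceSet hx0 hx1, ?_⟩⟩
  exact hρ01 ▸ avgL1CoherenceSet.two_mul_norm_apply_zero_one_mem_lowerBounds
end
end
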